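/- arXiv:math/0609633 — 2 statements merged into one kernel-verified Lean document; each statement's English description precedes it below -/
import Mathlib

section
/- Let L : [0,1] × ℝⁿ × ℝⁿ → ℝ be C² satisfying ‖D_v L(t,q,v)‖ ≤ ℓ₂(1+|v|) and ‖D_q L(t,q,v)‖ ≤ ℓ₂(1+|v|²). Then the action functional 𝔸_L(γ) = ∫₀¹ L(t,γ(t),γ'(t)) dt is continuously Fréchet differentiable on W^{1,2}([0,1],ℝⁿ), with differential D𝔸_L(γ)[ξ] = ∫₀¹ (D_q L(t,γ,γ')[ξ] + D_v L(t,γ,γ')[ξ']) dt. -/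
open Set MeasureTheory

/-- The `W^{1,2}` space of curves, modelled as initial point plus `L²` derivative:
a curve corresponds to `(a, g)` via `γ(t) = a + ∫₀ᵗ g`. -/
noncomputable def actionFunctional (n : ℕ)
    (L : ℝ → EuclideanSpace ℝ (Fin n) → EuclideanSpace ℝ (Fin n) → ℝ) :
    EuclideanSpace ℝ (Fin n) ×
      Lp (EuclideanSpace ℝ (Fin n)) 2 (volume.restrict (Ioc (0:ℝ) 1)) → ℝ :=
  fun p => ∫ t in Ioc (0:ℝ) 1,
    L t (p.1 + ∫ s in Ioc (0:ℝ) t, p.2 s) (p.2 t)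

open Filter Metric Asymptotics Topology

set_option maxHeartbeats 1000000
set_option synthInstance.maxHeartbeats 400000

noncomputable section Stmt9Aux

abbrev EE (n : ℕ) := EuclideanSpace ℝ (Fin n)
local notation "μ₀" => (MeasureTheory.volume.restrict (Set.Ioc (0:ℝ) 1))
abbrev XX (n : ℕ) := Lp (EE n) 2 (MeasureTheory.volume.restrict (Set.Ioc (0:ℝ) 1))
abbrev HH (n : ℕ) := EE n × XX n

variable {n : ℕ}

instance : IsProbabilityMeasure (μ₀ : Measure ℝ) :=
  ⟨by rw [Measure.restrict_apply_univ, Real.volume_Ioc]; norm_num⟩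

lemma memL1 (g : XX n) : Integrable (⇑g) μ₀ :=
  (Lp.memLp g).integrable (by norm_num)

lemma integrableOn_vol (g : XX n) : IntegrableOn (⇑g) (Ioc (0:ℝ) 1) volume := memL1 g

/-- the curve associated to a point of `HH n`. -/
def crv (p : HH n) (t : ℝ) : EE n := p.1 + ∫ s in Ioc (0:ℝ) t, p.2 s

lemma crv_continuousOn (p : HH n) : ContinuousOn (crv p) (Icc (0:ℝ) 1) := by
  have h_int : IntegrableOn (⇑p.2) (Icc (0:ℝ) 1) volume :=
    (integrableOn_Icc_iff_integrableOn_Ioc).2 (integrableOn_vol p.2)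
  exact continuousOn_const.add (intervalIntegral.continuousOn_primitive h_int)

lemma crv_aesm (p : HH n) : AEStronglyMeasurable (crv p) μ₀ :=
  ((crv_continuousOn p).mono Ioc_subset_Icc_self).aestronglyMeasurable measurableSet_Ioc

lemma nrm_sq (g : XX n) : ∫ t, ‖g t‖^2 ∂μ₀ = ‖g‖^2 := by
  have h1 : (inner ℝ g g) = ∫ t, inner ℝ (g t) (g t) ∂μ₀ := L2.inner_def g g
  have h2 : ∀ t, (inner ℝ (g t) (g t)) = ‖g t‖^2 := fun t => real_inner_self_eq_norm_sq _
  rw [real_inner_self_eq_norm_sq] at h1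
  rw [h1]
  exact integral_congr_ae (Eventually.of_forall fun t => (h2 t).symm)

lemma integrable_nrm_sq (g : XX n) : Integrable (fun t => ‖g t‖^2) μ₀ := by
  have := L2.integrable_inner (𝕜 := ℝ) g g
  exact this.congr (Eventually.of_forall fun t => real_inner_self_eq_norm_sq _)

lemma memLp_norm (g : XX n) : MemLp (fun t => ‖g t‖) 2 μ₀ := (Lp.memLp g).norm

lemma eLp_norm_toReal (g : XX n) : (eLpNorm (fun t => ‖g t‖) 2 μ₀).toReal = ‖g‖ := by
  rw [eLpNorm_norm, ← Lp.norm_def]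

/-- Cauchy-Schwarz for integrals of real functions. -/
lemma cs_integral {f h : ℝ → ℝ} (hf : MemLp f 2 μ₀) (hh : MemLp h 2 μ₀) :
    Integrable (fun t => f t * h t) μ₀ ∧
    ∫ t, f t * h t ∂μ₀ ≤ (eLpNorm f 2 μ₀).toReal * (eLpNorm h 2 μ₀).toReal := by
  set F := hf.toLp f
  set H := hh.toLp h
  have hFf : ⇑F =ᵐ[μ₀] f := hf.coeFn_toLp
  have hHh : ⇑H =ᵐ[μ₀] h := hh.coeFn_toLp
  have hmul : (fun t => (F : ℝ → ℝ) t * (H : ℝ → ℝ) t) =ᵐ[μ₀] fun t => f t * h t := by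
    filter_upwards [hFf, hHh] with t h1 h2; rw [h1, h2]
  have hint : Integrable (fun t => (F : ℝ → ℝ) t * (H : ℝ → ℝ) t) μ₀ := by
    have := L2.integrable_inner (𝕜 := ℝ) F H
    simpa [RCLike.inner_apply, mul_comm] using this
  constructor
  · exact hint.congr hmul
  · have h1 : (inner ℝ F H) = ∫ t, (F : ℝ → ℝ) t * (H : ℝ → ℝ) t ∂μ₀ := by
      rw [L2.inner_def]; simp [RCLike.inner_apply, mul_comm]
    have h2 : (inner ℝ F H) ≤ ‖F‖ * ‖H‖ := real_inner_le_norm F H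
    have h3 : ∫ t, f t * h t ∂μ₀ = (inner ℝ F H) := by
      rw [h1]; exact integral_congr_ae hmul.symm
    rw [h3]
    calc (inner ℝ F H) ≤ ‖F‖ * ‖H‖ := h2
    _ = (eLpNorm f 2 μ₀).toReal * (eLpNorm h 2 μ₀).toReal := by
        rw [Lp.norm_toLp, Lp.norm_toLp]

lemma cs_Lp (g ξ : XX n) :
    Integrable (fun t => ‖g t‖ * ‖ξ t‖) μ₀ ∧
    ∫ t, ‖g t‖ * ‖ξ t‖ ∂μ₀ ≤ ‖g‖ * ‖ξ‖ := by
  obtain ⟨h1, h2⟩ := cs_integral (memLp_norm g) (memLp_norm ξ)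
  refine ⟨h1, h2.trans_eq ?_⟩
  rw [eLp_norm_toReal, eLp_norm_toReal]

lemma nrm_l1 (g : XX n) : ∫ t, ‖g t‖ ∂μ₀ ≤ ‖g‖ := by
  have hc : MemLp (fun _ : ℝ => (1:ℝ)) 2 μ₀ := memLp_const 1
  obtain ⟨_, h2⟩ := cs_integral (memLp_norm g) hc
  have : ∫ t, ‖g t‖ ∂μ₀ = ∫ t, ‖g t‖ * 1 ∂μ₀ := by simp
  rw [this]
  refine h2.trans ?_
  rw [eLp_norm_toReal]
  have : eLpNorm (fun _ : ℝ => (1:ℝ)) 2 μ₀ = 1 := by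
    rw [eLpNorm_const _ (by norm_num) (by simp [NeZero.ne'])]
    simp
  rw [this]; simp

lemma integral_Ioc_sub (f : ℝ → EE n) (hf : IntegrableOn f (Ioc (0:ℝ) 1) volume)
    {t : ℝ} (ht : t ∈ Icc (0:ℝ) 1) :
    ‖∫ s in Ioc (0:ℝ) t, f s‖ ≤ ∫ s in Ioc (0:ℝ) 1, ‖f s‖ := by
  calc ‖∫ s in Ioc (0:ℝ) t, f s‖ ≤ ∫ s in Ioc (0:ℝ) t, ‖f s‖ := norm_integral_le_integral_norm f
  _ ≤ ∫ s in Ioc (0:ℝ) 1, ‖f s‖ := by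
      refine setIntegral_mono_set hf.norm (Eventually.of_forall fun s => norm_nonneg _) ?_
      exact HasSubset.Subset.eventuallyLE (Ioc_subset_Ioc_right ht.2)

lemma crv_le (p : HH n) {t : ℝ} (ht : t ∈ Icc (0:ℝ) 1) : ‖crv p t‖ ≤ ‖p.1‖ + ‖p.2‖ := by
  refine (norm_add_le _ _).trans (add_le_add le_rfl ?_)
  refine (integral_Ioc_sub _ (integrableOn_vol p.2) ht).trans ?_
  exact nrm_l1 p.2



-- restriction of a.e. equality to subintervals
lemma ae_sub {f g : ℝ → EE n} (h : f =ᵐ[μ₀] g) {t : ℝ} (ht : t ∈ Icc (0:ℝ) 1) :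
    f =ᵐ[volume.restrict (Ioc (0:ℝ) t)] g :=
  ae_restrict_of_ae_restrict_of_subset (Ioc_subset_Ioc_right ht.2) h


lemma crv_add (w w' : HH n) {t : ℝ} (ht : t ∈ Icc (0:ℝ) 1) :
    (w + w').1 + (∫ s in Ioc (0:ℝ) t, (w + w').2 s) =
      (w.1 + ∫ s in Ioc (0:ℝ) t, w.2 s) + (w'.1 + ∫ s in Ioc (0:ℝ) t, w'.2 s) := by
  have h1 : (∫ s in Ioc (0:ℝ) t, (w + w').2 s) =
      (∫ s in Ioc (0:ℝ) t, w.2 s) + ∫ s in Ioc (0:ℝ) t, w'.2 s := by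
    have hae : ⇑(w.2 + w'.2) =ᵐ[μ₀] ⇑w.2 + ⇑w'.2 := Lp.coeFn_add w.2 w'.2
    have : (∫ s in Ioc (0:ℝ) t, (w.2 + w'.2) s) = ∫ s in Ioc (0:ℝ) t, (⇑w.2 + ⇑w'.2) s :=
      integral_congr_ae (ae_sub hae ht)
    show (∫ s in Ioc (0:ℝ) t, (w.2 + w'.2) s) = _
    rw [this]
    exact integral_add ((integrableOn_vol w.2).mono_set (Ioc_subset_Ioc_right ht.2))
      ((integrableOn_vol w'.2).mono_set (Ioc_subset_Ioc_right ht.2))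
  show (w.1 + w'.1) + _ = _
  rw [h1]; abel

lemma crv_smul (c : ℝ) (w : HH n) {t : ℝ} (ht : t ∈ Icc (0:ℝ) 1) :
    (c • w).1 + (∫ s in Ioc (0:ℝ) t, (c • w).2 s) =
      c • (w.1 + ∫ s in Ioc (0:ℝ) t, w.2 s) := by
  have h1 : (∫ s in Ioc (0:ℝ) t, (c • w).2 s) = c • ∫ s in Ioc (0:ℝ) t, w.2 s := by
    have hae : ⇑(c • w.2) =ᵐ[μ₀] c • ⇑w.2 := Lp.coeFn_smul c w.2
    have : (∫ s in Ioc (0:ℝ) t, (c • w.2) s) = ∫ s in Ioc (0:ℝ) t, (c • ⇑w.2) s :=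
      integral_congr_ae (ae_sub hae ht)
    show (∫ s in Ioc (0:ℝ) t, (c • w.2) s) = _
    rw [this]
    exact integral_smul c _
  show c • w.1 + _ = _
  rw [h1, smul_add]



variable {L : ℝ → EE n → EE n → ℝ} {ℓ₂ : ℝ}

def Jq (n : ℕ) : EE n →L[ℝ] ℝ × EE n × EE n :=
  (0 : EE n →L[ℝ] ℝ).prod ((ContinuousLinearMap.id ℝ (EE n)).prod 0)

def Jv (n : ℕ) : EE n →L[ℝ] ℝ × EE n × EE n :=
  (0 : EE n →L[ℝ] ℝ).prod ((0 : EE n →L[ℝ] EE n).prod (ContinuousLinearMap.id ℝ (EE n)))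

def Aq (L : ℝ → EE n → EE n → ℝ) (t : ℝ) (q v : EE n) : EE n →L[ℝ] ℝ :=
  (fderiv ℝ (fun p : ℝ × EE n × EE n => L p.1 p.2.1 p.2.2) (t, q, v)).comp (Jq n)

def Av (L : ℝ → EE n → EE n → ℝ) (t : ℝ) (q v : EE n) : EE n →L[ℝ] ℝ :=
  (fderiv ℝ (fun p : ℝ × EE n × EE n => L p.1 p.2.1 p.2.2) (t, q, v)).comp (Jv n)

section Lagrangian

variable (hC2 : ContDiff ℝ 2 (fun p : ℝ × EE n × EE n => L p.1 p.2.1 p.2.2))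

include hC2

lemma hasFDerivAt_q (t : ℝ) (q v : EE n) : HasFDerivAt (fun q' => L t q' v) (Aq L t q v) q := by
  have hpath : HasFDerivAt (fun q' : EE n => ((t, q', v) : ℝ × EE n × EE n)) (Jq n) q :=
    (hasFDerivAt_const t q).prodMk ((hasFDerivAt_id q).prodMk (hasFDerivAt_const v q))
  exact ((hC2.differentiable (by norm_num)).differentiableAt.hasFDerivAt).comp q hpath

lemma hasFDerivAt_v (t : ℝ) (q v : EE n) : HasFDerivAt (L t q) (Av L t q v) v := by
  have hpath : HasFDerivAt (fun v' : EE n => ((t, q, v') : ℝ × EE n × EE n)) (Jv n) v :=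
    (hasFDerivAt_const t v).prodMk ((hasFDerivAt_const q v).prodMk (hasFDerivAt_id v))
  exact ((hC2.differentiable (by norm_num)).differentiableAt.hasFDerivAt).comp v hpath

lemma fderiv_q_eq (t : ℝ) (q v : EE n) : fderiv ℝ (fun q' => L t q' v) q = Aq L t q v :=
  (hasFDerivAt_q hC2 t q v).fderiv

lemma fderiv_v_eq (t : ℝ) (q v : EE n) : fderiv ℝ (L t q) v = Av L t q v :=
  (hasFDerivAt_v hC2 t q v).fderiv

lemma Aq_le (hgrow_q : ∀ t q v, ‖fderiv ℝ (fun q' => L t q' v) q‖ ≤ ℓ₂ * (1 + ‖v‖ ^ 2))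
    (t : ℝ) (q v : EE n) : ‖Aq L t q v‖ ≤ ℓ₂ * (1 + ‖v‖ ^ 2) :=
  fderiv_q_eq hC2 t q v ▸ hgrow_q t q v

lemma Av_le (hgrow_v : ∀ t q v, ‖fderiv ℝ (L t q) v‖ ≤ ℓ₂ * (1 + ‖v‖))
    (t : ℝ) (q v : EE n) : ‖Av L t q v‖ ≤ ℓ₂ * (1 + ‖v‖) :=
  fderiv_v_eq hC2 t q v ▸ hgrow_v t q v

omit hC2 in
lemma l2_nonneg (hgrow_v : ∀ t q v, ‖fderiv ℝ (L t q) v‖ ≤ ℓ₂ * (1 + ‖v‖)) : 0 ≤ ℓ₂ := by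
  have h := (norm_nonneg (fderiv ℝ (L 0 0) 0)).trans (hgrow_v 0 0 0)
  simpa using h

lemma Aq_cont : Continuous (fun x : ℝ × EE n × EE n => Aq L x.1 x.2.1 x.2.2) :=
  (hC2.continuous_fderiv (by norm_num)).clm_comp continuous_const

lemma Av_cont : Continuous (fun x : ℝ × EE n × EE n => Av L x.1 x.2.1 x.2.2) :=
  (hC2.continuous_fderiv (by norm_num)).clm_comp continuous_const

lemma hasDerivAt_line (t : ℝ) (q v b w : EE n) (s₀ : ℝ) :
    HasDerivAt (fun s : ℝ => L t (q + s • b) (v + s • w))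
      (Aq L t (q + s₀ • b) (v + s₀ • w) b + Av L t (q + s₀ • b) (v + s₀ • w) w) s₀ := by
  have h1 : HasDerivAt (fun s : ℝ => q + s • b) b s₀ := by
    simpa using ((hasDerivAt_id s₀).smul_const b).const_add q
  have h2 : HasDerivAt (fun s : ℝ => v + s • w) w s₀ := by
    simpa using ((hasDerivAt_id s₀).smul_const w).const_add v
  have hpath : HasDerivAt (fun s : ℝ => ((t, q + s • b, v + s • w) : ℝ × EE n × EE n))
      ((0 : ℝ), b, w) s₀ := (hasDerivAt_const s₀ t).prodMk (h1.prodMk h2)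
  have hfull := ((hC2.differentiable (by norm_num)).differentiableAt
    (x := (t, q + s₀ • b, v + s₀ • w))).hasFDerivAt
  have hcomp := hfull.comp_hasDerivAt s₀ hpath
  refine hcomp.congr_deriv ?_
  have hsplit : ((0 : ℝ), b, w) = Jq n b + Jv n w := by
    simp [Jq, Jv, ContinuousLinearMap.prod_apply]
  rw [hsplit, map_add]
  rfl

lemma L_scalar_bound
    (hgrow_q : ∀ t q v, ‖fderiv ℝ (fun q' => L t q' v) q‖ ≤ ℓ₂ * (1 + ‖v‖ ^ 2))
    (hgrow_v : ∀ t q v, ‖fderiv ℝ (L t q) v‖ ≤ ℓ₂ * (1 + ‖v‖)) :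
    ∃ M : ℝ, 0 ≤ M ∧ ∀ t ∈ Icc (0:ℝ) 1, ∀ q v,
      |L t q v| ≤ M + ℓ₂ * (1 + ‖v‖ ^ 2) * ‖q‖ + ℓ₂ * (1 + ‖v‖) * ‖v‖ := by
  have hl2 : 0 ≤ ℓ₂ := l2_nonneg hgrow_v
  have cont : Continuous fun t => L t (0 : EE n) (0 : EE n) := by
    have : Continuous fun t : ℝ => ((t, 0, 0) : ℝ × EE n × EE n) :=
      continuous_id.prodMk continuous_const
    exact hC2.continuous.comp this
  obtain ⟨M, hM⟩ := isCompact_Icc.exists_bound_of_continuousOn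
    (cont.continuousOn (s := Icc (0:ℝ) 1))
  refine ⟨max M 0, le_max_right _ _, fun t ht q v => ?_⟩
  have h1 : ‖L t q v - L t 0 v‖ ≤ ℓ₂ * (1 + ‖v‖ ^ 2) * ‖q - 0‖ :=
    convex_univ.norm_image_sub_le_of_norm_fderiv_le
      (fun x _ => (hasFDerivAt_q hC2 t x v).differentiableAt)
      (fun x _ => hgrow_q t x v) (mem_univ 0) (mem_univ q)
  have h2 : ‖L t 0 v - L t 0 0‖ ≤ ℓ₂ * (1 + ‖v‖) * ‖v - 0‖ := by
    refine (convex_closedBall (0 : EE n) ‖v‖).norm_image_sub_le_of_norm_fderiv_le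
      (fun x _ => (hasFDerivAt_v hC2 t 0 x).differentiableAt)
      (fun x hx => ?_) ?_ ?_
    · refine (hgrow_v t 0 x).trans ?_
      have hxv : ‖x‖ ≤ ‖v‖ := by simpa [Metric.mem_closedBall] using hx
      nlinarith
    · simp [Metric.mem_closedBall]
    · simp [Metric.mem_closedBall]
  have h0 : |L t 0 0| ≤ max M 0 := le_trans (by simpa [Real.norm_eq_abs] using hM t ht) (le_max_left _ _)
  rw [sub_zero] at h1 h2
  have := abs_sub_abs_le_abs_sub (L t q v) (L t 0 v)
  have e1 : |L t q v - L t 0 v| ≤ ℓ₂ * (1 + ‖v‖ ^ 2) * ‖q‖ := by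
    simpa [Real.norm_eq_abs] using h1
  have e2 : |L t 0 v - L t 0 0| ≤ ℓ₂ * (1 + ‖v‖) * ‖v‖ := by
    simpa [Real.norm_eq_abs] using h2
  calc |L t q v| = |L t 0 0 + (L t 0 v - L t 0 0) + (L t q v - L t 0 v)| := by ring_nf
  _ ≤ |L t 0 0| + |L t 0 v - L t 0 0| + |L t q v - L t 0 v| := by
      exact (abs_add_le _ _).trans (add_le_add_left (abs_add_le _ _) _)
  _ ≤ max M 0 + ℓ₂ * (1 + ‖v‖) * ‖v‖ + ℓ₂ * (1 + ‖v‖ ^ 2) * ‖q‖ := by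
      exact add_le_add (add_le_add h0 e2) e1
  _ = max M 0 + ℓ₂ * (1 + ‖v‖ ^ 2) * ‖q‖ + ℓ₂ * (1 + ‖v‖) * ‖v‖ := by ring

end Lagrangian


section Core

variable (L : ℝ → EE n → EE n → ℝ) (ℓ₂ : ℝ)

/-- `D_q L` along a curve. -/
def aqf (p : HH n) : ℝ → (EE n →L[ℝ] ℝ) := fun t => Aq L t (crv p t) (p.2 t)

/-- `D_v L` along a curve. -/
def avf (p : HH n) : ℝ → (EE n →L[ℝ] ℝ) := fun t => Av L t (crv p t) (p.2 t)

variable {L ℓ₂}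

lemma triple_aesm (p : HH n) :
    AEStronglyMeasurable (fun t => ((t, crv p t, p.2 t) : ℝ × EE n × EE n)) μ₀ :=
  aestronglyMeasurable_id.prodMk ((crv_aesm p).prodMk (Lp.aestronglyMeasurable p.2))

variable (hC2 : ContDiff ℝ 2 (fun p : ℝ × EE n × EE n => L p.1 p.2.1 p.2.2))
variable (hgrow_q : ∀ t q v, ‖fderiv ℝ (fun q' => L t q' v) q‖ ≤ ℓ₂ * (1 + ‖v‖ ^ 2))
variable (hgrow_v : ∀ t q v, ‖fderiv ℝ (L t q) v‖ ≤ ℓ₂ * (1 + ‖v‖))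

lemma apply_aesm {u : ℝ → EE n →L[ℝ] ℝ} {f : ℝ → EE n} (hu : AEStronglyMeasurable u μ₀)
    (hf : AEStronglyMeasurable f μ₀) : AEStronglyMeasurable (fun t => u t (f t)) μ₀ := by
  have hb : Continuous (fun z : (EE n →L[ℝ] ℝ) × EE n => z.1 z.2) :=
    isBoundedBilinearMap_apply.continuous
  exact hb.comp_aestronglyMeasurable (hu.prodMk hf)

include hC2 hgrow_q hgrow_v

omit hgrow_q hgrow_v in
lemma aqf_aesm (p : HH n) : AEStronglyMeasurable (aqf L p) μ₀ :=
  (Aq_cont hC2).comp_aestronglyMeasurable (triple_aesm p)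

omit hgrow_q hgrow_v in
lemma avf_aesm (p : HH n) : AEStronglyMeasurable (avf L p) μ₀ :=
  (Av_cont hC2).comp_aestronglyMeasurable (triple_aesm p)

omit hC2 hgrow_q hgrow_v in
lemma int_poly (g : XX n) (c : ℝ) : Integrable (fun t => c * (1 + ‖g t‖^2)) μ₀ :=
  (((integrable_const (1:ℝ)).add (integrable_nrm_sq g)).const_mul c)

omit hC2 hgrow_q hgrow_v in
lemma memLp_aff (g : XX n) (c : ℝ) : MemLp (fun t => c * (1 + ‖g t‖)) 2 μ₀ :=
  ((memLp_const (1:ℝ)).add (memLp_norm g)).const_mul c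

omit hC2 hgrow_q hgrow_v in
lemma eLp_of_Lp (g : XX n) : eLpNorm (⇑g) 2 μ₀ = ENNReal.ofReal ‖g‖ := by
  rw [Lp.norm_def, ENNReal.ofReal_toReal (Lp.eLpNorm_ne_top g)]

omit hC2 hgrow_q hgrow_v in
lemma eLp_aff (g : XX n) (c : ℝ) (hc : 0 ≤ c) :
    (eLpNorm (fun t => c * (1 + ‖g t‖)) 2 μ₀).toReal ≤ c * (1 + ‖g‖) := by
  have h0 : (fun t : ℝ => c * (1 + ‖g t‖)) = c • ((fun _ : ℝ => (1:ℝ)) + fun t => ‖g t‖) := by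
    funext t; simp [Pi.add_apply, smul_eq_mul]
  rw [h0, eLpNorm_const_smul]
  have h1 : eLpNorm ((fun _ : ℝ => (1:ℝ)) + fun t => ‖g t‖) 2 μ₀ ≤
      eLpNorm (fun _ : ℝ => (1:ℝ)) 2 μ₀ + eLpNorm (fun t => ‖g t‖) 2 μ₀ :=
    eLpNorm_add_le aestronglyMeasurable_const (Lp.aestronglyMeasurable g).norm (by norm_num)
  have h2 : eLpNorm (fun _ : ℝ => (1:ℝ)) 2 μ₀ = 1 := by
    rw [eLpNorm_const _ (by norm_num) (by simp [NeZero.ne'])]; simp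
  have h3 : eLpNorm (fun t => ‖g t‖) 2 μ₀ = ENNReal.ofReal ‖g‖ := by
    rw [eLpNorm_norm, eLp_of_Lp]
  have h4 : eLpNorm ((fun _ : ℝ => (1:ℝ)) + fun t => ‖g t‖) 2 μ₀ ≤ ENNReal.ofReal (1 + ‖g‖) := by
    refine h1.trans ?_
    rw [h2, h3, ENNReal.ofReal_add (by norm_num) (norm_nonneg _)]
    simp
  have h5 : (‖c‖₊ • eLpNorm ((fun _ : ℝ => (1:ℝ)) + fun t => ‖g t‖) 2 μ₀) ≤
      (‖c‖₊ : ENNReal) * ENNReal.ofReal (1 + ‖g‖) := by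
    rw [ENNReal.smul_def, smul_eq_mul]
    exact mul_le_mul_right h4 _
  refine (ENNReal.toReal_mono (ENNReal.mul_ne_top ENNReal.coe_ne_top ENNReal.ofReal_ne_top)
    h5).trans ?_
  rw [ENNReal.toReal_mul, ENNReal.coe_toReal, ENNReal.toReal_ofReal (by positivity),
    coe_nnnorm, Real.norm_eq_abs, abs_of_nonneg hc]

omit hgrow_v in
lemma int_one (p w : HH n) : Integrable (fun t => aqf L p t (crv w t)) μ₀ := by
  refine Integrable.mono' (int_poly p.2 (ℓ₂ * (‖w.1‖ + ‖w.2‖)))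
    (apply_aesm (aqf_aesm hC2 p) (crv_aesm w)) ?_
  filter_upwards [ae_restrict_mem measurableSet_Ioc] with t ht
  have hIcc : t ∈ Icc (0:ℝ) 1 := Ioc_subset_Icc_self ht
  have hb := Aq_le hC2 hgrow_q t (crv p t) (p.2 t)
  have hc := crv_le w hIcc
  calc ‖aqf L p t (crv w t)‖ ≤ ‖aqf L p t‖ * ‖crv w t‖ := ContinuousLinearMap.le_opNorm _ _
  _ ≤ (ℓ₂ * (1 + ‖p.2 t‖^2)) * (‖w.1‖ + ‖w.2‖) := by
      refine mul_le_mul hb hc (norm_nonneg _) ?_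
      exact le_trans (norm_nonneg _) hb
  _ = ℓ₂ * (‖w.1‖ + ‖w.2‖) * (1 + ‖p.2 t‖^2) := by ring

omit hgrow_q in
lemma int_two (p w : HH n) : Integrable (fun t => avf L p t (w.2 t)) μ₀ := by
  have hcs := (cs_integral (memLp_aff p.2 ℓ₂) (memLp_norm w.2)).1
  refine Integrable.mono' hcs (apply_aesm (avf_aesm hC2 p) (Lp.aestronglyMeasurable w.2)) ?_
  refine Eventually.of_forall fun t => ?_
  have hb := Av_le hC2 hgrow_v t (crv p t) (p.2 t)
  calc ‖avf L p t (w.2 t)‖ ≤ ‖avf L p t‖ * ‖w.2 t‖ := ContinuousLinearMap.le_opNorm _ _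
  _ ≤ (ℓ₂ * (1 + ‖p.2 t‖)) * ‖w.2 t‖ :=
      mul_le_mul_of_nonneg_right hb (norm_nonneg _)

lemma int_BopFun (p w : HH n) :
    Integrable (fun t => aqf L p t (crv w t) + avf L p t (w.2 t)) μ₀ :=
  (int_one hC2 hgrow_q p w).add (int_two hC2 hgrow_v p w)

omit hC2 hgrow_q hgrow_v in
lemma crv_add' (w w' : HH n) {t : ℝ} (ht : t ∈ Icc (0:ℝ) 1) :
    crv (w + w') t = crv w t + crv w' t := crv_add w w' ht

omit hC2 hgrow_q hgrow_v in
lemma crv_smul' (c : ℝ) (w : HH n) {t : ℝ} (ht : t ∈ Icc (0:ℝ) 1) :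
    crv (c • w) t = c • crv w t := crv_smul c w ht

/-- The candidate differential, as a linear map. -/
def BopL (p : HH n) : HH n →ₗ[ℝ] ℝ where
  toFun w := ∫ t, (aqf L p t (crv w t) + avf L p t (w.2 t)) ∂μ₀
  map_add' w w' := by
    rw [← integral_add (int_BopFun hC2 hgrow_q hgrow_v p w) (int_BopFun hC2 hgrow_q hgrow_v p w')]
    refine integral_congr_ae ?_
    filter_upwards [ae_restrict_mem measurableSet_Ioc, Lp.coeFn_add w.2 w'.2] with t ht hadd
    have hIcc : t ∈ Icc (0:ℝ) 1 := Ioc_subset_Icc_self ht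
    have h2 : (w + w').2 t = w.2 t + w'.2 t := hadd
    rw [crv_add' w w' hIcc, h2, map_add, map_add]
    ring
  map_smul' c w := by
    rw [RingHom.id_apply, ← integral_smul]
    refine integral_congr_ae ?_
    filter_upwards [ae_restrict_mem measurableSet_Ioc, Lp.coeFn_smul c w.2] with t ht hsmul
    have hIcc : t ∈ Icc (0:ℝ) 1 := Ioc_subset_Icc_self ht
    have h2 : (c • w).2 t = c • w.2 t := hsmul
    rw [crv_smul' c w hIcc, h2, _root_.map_smul, _root_.map_smul]
    exact (smul_add c _ _).symm

lemma BopL_bound (p w : HH n) :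
    ‖BopL hC2 hgrow_q hgrow_v p w‖ ≤
      (2 * ℓ₂ * (1 + ‖p.2‖^2) + ℓ₂ * (1 + ‖p.2‖)) * ‖w‖ := by
  have hl2 : 0 ≤ ℓ₂ := l2_nonneg hgrow_v
  have hI1 : ∫ t, ‖aqf L p t (crv w t)‖ ∂μ₀ ≤ 2 * ℓ₂ * (1 + ‖p.2‖^2) * ‖w‖ := by
    have hb : ∀ᵐ t ∂μ₀, ‖aqf L p t (crv w t)‖ ≤ ℓ₂ * (‖w.1‖ + ‖w.2‖) * (1 + ‖p.2 t‖^2) := by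
      filter_upwards [ae_restrict_mem measurableSet_Ioc] with t ht
      have hIcc : t ∈ Icc (0:ℝ) 1 := Ioc_subset_Icc_self ht
      have hbq := Aq_le hC2 hgrow_q t (crv p t) (p.2 t)
      have hc := crv_le w hIcc
      calc ‖aqf L p t (crv w t)‖ ≤ ‖aqf L p t‖ * ‖crv w t‖ := ContinuousLinearMap.le_opNorm _ _
      _ ≤ (ℓ₂ * (1 + ‖p.2 t‖^2)) * (‖w.1‖ + ‖w.2‖) :=
          mul_le_mul hbq hc (norm_nonneg _) (le_trans (norm_nonneg _) hbq)
      _ = ℓ₂ * (‖w.1‖ + ‖w.2‖) * (1 + ‖p.2 t‖^2) := by ring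
    have hint := integral_mono_ae ((int_one hC2 hgrow_q p w).norm)
      (int_poly p.2 (ℓ₂ * (‖w.1‖ + ‖w.2‖))) hb
    refine hint.trans ?_
    have : ∫ t, ℓ₂ * (‖w.1‖ + ‖w.2‖) * (1 + ‖p.2 t‖^2) ∂μ₀ =
        ℓ₂ * (‖w.1‖ + ‖w.2‖) * (1 + ‖p.2‖^2) := by
      rw [integral_const_mul]
      congr 1
      rw [integral_add (integrable_const _) (integrable_nrm_sq p.2), nrm_sq]
      simp
    rw [this]
    have h1 : ‖w.1‖ + ‖w.2‖ ≤ 2 * ‖w‖ := by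
      have := norm_fst_le w; have := norm_snd_le w; linarith
    have hx : (0:ℝ) ≤ 1 + ‖p.2‖^2 := by positivity
    calc ℓ₂ * (‖w.1‖ + ‖w.2‖) * (1 + ‖p.2‖^2)
        ≤ ℓ₂ * (2 * ‖w‖) * (1 + ‖p.2‖^2) :=
          mul_le_mul_of_nonneg_right (mul_le_mul_of_nonneg_left h1 hl2) hx
    _ = 2 * ℓ₂ * (1 + ‖p.2‖^2) * ‖w‖ := by ring
  have hI2 : ∫ t, ‖avf L p t (w.2 t)‖ ∂μ₀ ≤ ℓ₂ * (1 + ‖p.2‖) * ‖w‖ := by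
    have hb : ∀ᵐ t ∂μ₀, ‖avf L p t (w.2 t)‖ ≤ (ℓ₂ * (1 + ‖p.2 t‖)) * ‖w.2 t‖ := by
      refine Eventually.of_forall fun t => ?_
      have hbv := Av_le hC2 hgrow_v t (crv p t) (p.2 t)
      calc ‖avf L p t (w.2 t)‖ ≤ ‖avf L p t‖ * ‖w.2 t‖ := ContinuousLinearMap.le_opNorm _ _
      _ ≤ (ℓ₂ * (1 + ‖p.2 t‖)) * ‖w.2 t‖ := mul_le_mul_of_nonneg_right hbv (norm_nonneg _)
    obtain ⟨hcsi, hcs⟩ := cs_integral (memLp_aff p.2 ℓ₂) (memLp_norm w.2)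
    have hint := integral_mono_ae ((int_two hC2 hgrow_v p w).norm) hcsi hb
    refine hint.trans (hcs.trans ?_)
    rw [eLp_norm_toReal]
    have := eLp_aff p.2 ℓ₂ hl2
    have hw2 : ‖w.2‖ ≤ ‖w‖ := norm_snd_le w
    have h0 : (0:ℝ) ≤ (eLpNorm (fun t => ℓ₂ * (1 + ‖p.2 t‖)) 2 μ₀).toReal := ENNReal.toReal_nonneg
    nlinarith [norm_nonneg w.2, norm_nonneg p.2]
  have step : ‖BopL hC2 hgrow_q hgrow_v p w‖ ≤
      ∫ t, ‖aqf L p t (crv w t)‖ ∂μ₀ + ∫ t, ‖avf L p t (w.2 t)‖ ∂μ₀ := by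
    refine (norm_integral_le_integral_norm _).trans ?_
    rw [← integral_add ((int_one hC2 hgrow_q p w).norm) ((int_two hC2 hgrow_v p w).norm)]
    refine integral_mono_ae (int_BopFun hC2 hgrow_q hgrow_v p w).norm
      (((int_one hC2 hgrow_q p w).norm).add ((int_two hC2 hgrow_v p w).norm))
      (Eventually.of_forall fun t => norm_add_le _ _)
  refine step.trans ?_
  calc ∫ t, ‖aqf L p t (crv w t)‖ ∂μ₀ + ∫ t, ‖avf L p t (w.2 t)‖ ∂μ₀
      ≤ 2 * ℓ₂ * (1 + ‖p.2‖^2) * ‖w‖ + ℓ₂ * (1 + ‖p.2‖) * ‖w‖ := add_le_add hI1 hI2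
  _ = (2 * ℓ₂ * (1 + ‖p.2‖^2) + ℓ₂ * (1 + ‖p.2‖)) * ‖w‖ := by ring

/-- The candidate differential, as a continuous linear map. -/
def Bop (p : HH n) : HH n →L[ℝ] ℝ :=
  LinearMap.mkContinuous (BopL hC2 hgrow_q hgrow_v p)
    (2 * ℓ₂ * (1 + ‖p.2‖^2) + ℓ₂ * (1 + ‖p.2‖))
    (BopL_bound hC2 hgrow_q hgrow_v p)

lemma Bop_apply (p w : HH n) :
    Bop hC2 hgrow_q hgrow_v p w =
      ∫ t, (Aq L t (crv p t) (p.2 t) (crv w t) + Av L t (crv p t) (p.2 t) (w.2 t)) ∂μ₀ := rfl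

end Core


section Vitali

variable {L : ℝ → EE n → EE n → ℝ} {ℓ₂ : ℝ}
variable (hC2 : ContDiff ℝ 2 (fun p : ℝ × EE n × EE n => L p.1 p.2.1 p.2.2))
variable (hgrow_q : ∀ t q v, ‖fderiv ℝ (fun q' => L t q' v) q‖ ≤ ℓ₂ * (1 + ‖v‖ ^ 2))
variable (hgrow_v : ∀ t q v, ‖fderiv ℝ (L t q) v‖ ≤ ℓ₂ * (1 + ‖v‖))

lemma crv_diff (p q : HH n) {t : ℝ} (ht : t ∈ Icc (0:ℝ) 1) :
    ‖crv p t - crv q t‖ ≤ ‖p.1 - q.1‖ + ‖p.2 - q.2‖ := by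
  have hsub : (∫ s in Ioc (0:ℝ) t, p.2 s) - (∫ s in Ioc (0:ℝ) t, q.2 s) =
      ∫ s in Ioc (0:ℝ) t, (p.2 - q.2) s := by
    rw [← integral_sub ((integrableOn_vol p.2).mono_set (Ioc_subset_Ioc_right ht.2))
      ((integrableOn_vol q.2).mono_set (Ioc_subset_Ioc_right ht.2))]
    exact (integral_congr_ae (ae_sub (Lp.coeFn_sub p.2 q.2) ht)).symm
  have : crv p t - crv q t = (p.1 - q.1) + ∫ s in Ioc (0:ℝ) t, (p.2 - q.2) s := by
    rw [← hsub]; show p.1 + _ - (q.1 + _) = _; abel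
  rw [this]
  refine (norm_add_le _ _).trans (add_le_add le_rfl ?_)
  exact (integral_Ioc_sub _ (integrableOn_vol (p.2 - q.2)) ht).trans (nrm_l1 (p.2 - q.2))

lemma eLp_sub (a b : XX n) : eLpNorm (⇑a - ⇑b) 2 μ₀ = ENNReal.ofReal ‖a - b‖ := by
  rw [← eLpNorm_congr_ae (Lp.coeFn_sub a b), eLp_of_Lp]

lemma gconv_eLp {pk : ℕ → HH n} {p₀ : HH n} (h : Tendsto pk atTop (𝓝 p₀)) :
    Tendsto (fun k => eLpNorm (⇑(pk k).2 - ⇑p₀.2) 2 μ₀) atTop (𝓝 0) := by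
  have h1 : Tendsto (fun k => (pk k).2) atTop (𝓝 p₀.2) := (continuous_snd.tendsto p₀).comp h
  have h2 : Tendsto (fun k => ‖(pk k).2 - p₀.2‖) atTop (𝓝 0) :=
    tendsto_iff_norm_sub_tendsto_zero.1 h1
  have h3 := ENNReal.tendsto_ofReal (a := (0:ℝ)) h2
  rw [ENNReal.ofReal_zero] at h3
  refine h3.congr fun k => ?_
  rw [← eLp_sub]

lemma norm_tendsto {pk : ℕ → HH n} {p₀ : HH n} (h : Tendsto pk atTop (𝓝 p₀)) :
    Tendsto (fun k => ‖(pk k).2 - p₀.2‖) atTop (𝓝 0) :=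
  tendsto_iff_norm_sub_tendsto_zero.1 ((continuous_snd.tendsto p₀).comp h)

/-- convergence in measure of a composed sequence -/
lemma tim {Y : Type} [NormedAddCommGroup Y] {F : ℝ × EE n × EE n → Y} (hF : Continuous F)
    {pk : ℕ → HH n} {p₀ : HH n} (h : Tendsto pk atTop (𝓝 p₀)) :
    TendstoInMeasure μ₀ (fun k t => F (t, crv (pk k) t, (pk k).2 t)) atTop
      (fun t => F (t, crv p₀ t, p₀.2 t)) := by
  have hmeas : ∀ q : HH n, AEStronglyMeasurable (fun t => F (t, crv q t, q.2 t)) μ₀ :=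
    fun q => hF.comp_aestronglyMeasurable (triple_aesm q)
  intro ε hε
  refine tendsto_of_subseq_tendsto fun ns hns => ?_
  have hsub : Tendsto (fun j => eLpNorm (⇑(pk (ns j)).2 - ⇑p₀.2) 2 μ₀) atTop (𝓝 0) :=
    (gconv_eLp h).comp hns
  have htm : TendstoInMeasure μ₀ (fun j => ⇑(pk (ns j)).2) atTop ⇑p₀.2 :=
    tendstoInMeasure_of_tendsto_eLpNorm (p := 2) (by norm_num)
      (fun j => Lp.aestronglyMeasurable _) (Lp.aestronglyMeasurable _) hsub
  obtain ⟨ms, hms, hae⟩ := htm.exists_seq_tendsto_ae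
  have hsubsub : Tendsto (fun j => pk (ns (ms j))) atTop (𝓝 p₀) :=
    h.comp (hns.comp hms.tendsto_atTop)
  have hcrv : ∀ t ∈ Icc (0:ℝ) 1,
      Tendsto (fun j => crv (pk (ns (ms j))) t) atTop (𝓝 (crv p₀ t)) := by
    intro t ht
    rw [tendsto_iff_norm_sub_tendsto_zero]
    have hbd : ∀ j, ‖crv (pk (ns (ms j))) t - crv p₀ t‖ ≤
        ‖(pk (ns (ms j))).1 - p₀.1‖ + ‖(pk (ns (ms j))).2 - p₀.2‖ :=
      fun j => crv_diff _ _ ht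
    have h1 : Tendsto (fun j => ‖(pk (ns (ms j))).1 - p₀.1‖ + ‖(pk (ns (ms j))).2 - p₀.2‖)
        atTop (𝓝 0) := by
      have ha := tendsto_iff_norm_sub_tendsto_zero.1 ((continuous_fst.tendsto p₀).comp hsubsub)
      have hb := tendsto_iff_norm_sub_tendsto_zero.1 ((continuous_snd.tendsto p₀).comp hsubsub)
      simpa using ha.add hb
    exact squeeze_zero (fun j => norm_nonneg _) hbd h1
  have hae' : ∀ᵐ t ∂μ₀, Tendsto (fun j => F (t, crv (pk (ns (ms j))) t, (pk (ns (ms j))).2 t))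
      atTop (𝓝 (F (t, crv p₀ t, p₀.2 t))) := by
    filter_upwards [hae, ae_restrict_mem measurableSet_Ioc] with t htae ht
    refine (hF.tendsto _).comp ?_
    exact tendsto_const_nhds.prodMk_nhds
      ((hcrv t (Ioc_subset_Icc_self ht)).prodMk_nhds htae)
  exact ⟨ms, (tendstoInMeasure_of_tendsto_ae (fun j => hmeas _) hae') ε hε⟩

/-- domination transfers uniform integrability -/
lemma unif_of_le {Y : Type} [NormedAddCommGroup Y] {f : ℕ → ℝ → Y} {h : ℕ → ℝ → ℝ}
    {p : ENNReal} (hle : ∀ k t, ‖f k t‖ ≤ h k t) (hh : UnifIntegrable h p μ₀) :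
    UnifIntegrable f p μ₀ := by
  intro ε hε
  obtain ⟨δ, hδ, hδ'⟩ := hh hε
  refine ⟨δ, hδ, fun i s hs hμs => ?_⟩
  refine le_trans (eLpNorm_mono fun x => ?_) (hδ' i s hs hμs)
  by_cases hx : x ∈ s
  · simp only [Set.indicator_of_mem hx]
    exact (hle i x).trans (le_abs_self _)
  · simp [Set.indicator_of_notMem hx]

lemma unif_smul {f : ℕ → ℝ → ℝ} {p : ENNReal} (c : ℝ) (hf : UnifIntegrable f p μ₀) :
    UnifIntegrable (fun k t => c * f k t) p μ₀ := by
  rcases eq_or_ne c 0 with rfl | hc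
  · intro ε hε
    exact ⟨1, one_pos, fun i s _ _ => by
      simpa using (ENNReal.ofReal_pos.2 hε).le⟩
  intro ε hε
  have hεc : 0 < ε / |c| := div_pos hε (abs_pos.2 hc)
  obtain ⟨δ, hδ, hδ'⟩ := hf hεc
  refine ⟨δ, hδ, fun i s hs hμs => ?_⟩
  have hind : s.indicator (fun t => c * f i t) = c • s.indicator (f i) := by
    funext t
    by_cases hx : t ∈ s <;>
      simp [Set.indicator_of_mem, Set.indicator_of_notMem, hx, Pi.smul_apply]
  rw [hind, eLpNorm_const_smul]
  calc ‖c‖₊ • eLpNorm (s.indicator (f i)) p μ₀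
      ≤ ‖c‖₊ • ENNReal.ofReal (ε / |c|) := by
        exact mul_le_mul_right (hδ' i s hs hμs) _
  _ = ENNReal.ofReal ε := by
      rw [ENNReal.smul_def, smul_eq_mul, ← ENNReal.ofReal_coe_nnreal, coe_nnnorm,
        ← ENNReal.ofReal_mul (norm_nonneg _)]
      congr 1
      rw [Real.norm_eq_abs]
      field_simp

lemma aesm_nrm_sq (g : XX n) : AEStronglyMeasurable (fun t => ‖g t‖^2) μ₀ := by
  have : (fun t => ‖g t‖^2) = fun t => ‖g t‖ * ‖g t‖ := funext fun t => sq ‖g t‖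
  rw [this]
  exact (Lp.aestronglyMeasurable g).norm.mul (Lp.aestronglyMeasurable g).norm

lemma eLp_norm_add (a b : XX n) :
    (eLpNorm (fun t => ‖a t‖ + ‖b t‖) 2 μ₀).toReal ≤ ‖a‖ + ‖b‖ := by
  have h1 : eLpNorm ((fun t => ‖a t‖) + fun t => ‖b t‖) 2 μ₀ ≤
      eLpNorm (fun t => ‖a t‖) 2 μ₀ + eLpNorm (fun t => ‖b t‖) 2 μ₀ :=
    eLpNorm_add_le (Lp.aestronglyMeasurable a).norm (Lp.aestronglyMeasurable b).norm (by norm_num)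
  have h2 : eLpNorm (fun t => ‖a t‖) 2 μ₀ = ENNReal.ofReal ‖a‖ := by rw [eLpNorm_norm, eLp_of_Lp]
  have h3 : eLpNorm (fun t => ‖b t‖) 2 μ₀ = ENNReal.ofReal ‖b‖ := by rw [eLpNorm_norm, eLp_of_Lp]
  have h4 : eLpNorm (fun t => ‖a t‖ + ‖b t‖) 2 μ₀ ≤ ENNReal.ofReal (‖a‖ + ‖b‖) := by
    refine le_trans (le_of_eq (by rfl)) (h1.trans ?_)
    rw [h2, h3, ENNReal.ofReal_add (norm_nonneg _) (norm_nonneg _)]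
  refine (ENNReal.toReal_mono ENNReal.ofReal_ne_top h4).trans ?_
  rw [ENNReal.toReal_ofReal (by positivity)]

/-- L¹ convergence of squared norms -/
lemma sq_tendsto_L1 {pk : ℕ → HH n} {p₀ : HH n} (h : Tendsto pk atTop (𝓝 p₀)) :
    Tendsto (fun k => eLpNorm ((fun t => ‖(pk k).2 t‖^2) - fun t => ‖p₀.2 t‖^2) 1 μ₀)
      atTop (𝓝 0) := by
  have key : ∀ k, eLpNorm ((fun t => ‖(pk k).2 t‖^2) - fun t => ‖p₀.2 t‖^2) 1 μ₀ ≤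
      ENNReal.ofReal ((‖(pk k).2‖ + ‖p₀.2‖) * ‖(pk k).2 - p₀.2‖) := by
    intro k
    set g := (pk k).2
    set g0 := p₀.2
    have hmem1 : MemLp (fun t => ‖g t‖ + ‖g0 t‖) 2 μ₀ := (memLp_norm g).add (memLp_norm g0)
    have hmem2 : MemLp (fun t => ‖(g - g0 : XX n) t‖) 2 μ₀ := memLp_norm (g - g0)
    obtain ⟨hint, hcs⟩ := cs_integral hmem1 hmem2
    have hptwise : ∀ᵐ t ∂μ₀, ‖((fun t => ‖g t‖^2) - fun t => ‖g0 t‖^2) t‖ ≤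
        (fun t => (‖g t‖ + ‖g0 t‖) * ‖(g - g0 : XX n) t‖) t := by
      filter_upwards [Lp.coeFn_sub g g0] with t hsub
      simp only [Pi.sub_apply, Real.norm_eq_abs]
      rw [hsub]
      have h1 : |‖g t‖^2 - ‖g0 t‖^2| = |‖g t‖ - ‖g0 t‖| * (‖g t‖ + ‖g0 t‖) := by
        rw [← abs_of_nonneg (by positivity : (0:ℝ) ≤ ‖g t‖ + ‖g0 t‖), ← abs_mul]
        congr 1; ring
      rw [h1, Pi.sub_apply]
      calc |‖g t‖ - ‖g0 t‖| * (‖g t‖ + ‖g0 t‖)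
          ≤ ‖g t - g0 t‖ * (‖g t‖ + ‖g0 t‖) :=
            mul_le_mul_of_nonneg_right (abs_norm_sub_norm_le _ _) (by positivity)
      _ = (‖g t‖ + ‖g0 t‖) * ‖g t - g0 t‖ := mul_comm _ _
    have hsm : AEStronglyMeasurable ((fun t => ‖g t‖^2) - fun t => ‖g0 t‖^2) μ₀ :=
      (aesm_nrm_sq g).sub (aesm_nrm_sq g0)
    calc eLpNorm ((fun t => ‖g t‖^2) - fun t => ‖g0 t‖^2) 1 μ₀
        ≤ eLpNorm (fun t => (‖g t‖ + ‖g0 t‖) * ‖(g - g0 : XX n) t‖) 1 μ₀ := by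
          refine eLpNorm_mono_ae ?_
          filter_upwards [hptwise] with t ht
          refine ht.trans (le_abs_self _)
    _ = ENNReal.ofReal (∫ t, (‖g t‖ + ‖g0 t‖) * ‖(g - g0 : XX n) t‖ ∂μ₀) := by
          rw [eLpNorm_one_eq_lintegral_enorm,
            ← ofReal_integral_norm_eq_lintegral_enorm hint]
          refine congrArg ENNReal.ofReal (integral_congr_ae (Eventually.of_forall fun t => ?_))
          simp only [Real.norm_eq_abs]
          exact abs_of_nonneg (by positivity)
    _ ≤ ENNReal.ofReal ((‖g‖ + ‖g0‖) * ‖g - g0‖) := by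
          refine ENNReal.ofReal_le_ofReal (hcs.trans ?_)
          have e1 := eLp_norm_add g g0
          have e2 : (eLpNorm (fun t => ‖(g - g0 : XX n) t‖) 2 μ₀).toReal = ‖g - g0‖ :=
            eLp_norm_toReal (g - g0)
          rw [e2]
          refine mul_le_mul_of_nonneg_right e1 (norm_nonneg _)
  have hb : Tendsto (fun k => (‖(pk k).2‖ + ‖p₀.2‖) * ‖(pk k).2 - p₀.2‖) atTop (𝓝 0) := by
    have h1 : Tendsto (fun k => ‖(pk k).2‖ + ‖p₀.2‖) atTop (𝓝 (‖p₀.2‖ + ‖p₀.2‖)) := by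
      exact (((continuous_snd.tendsto p₀).comp h).norm).add tendsto_const_nhds
    have := h1.mul (norm_tendsto h)
    simpa using this
  have hb' := ENNReal.tendsto_ofReal (a := (0:ℝ)) hb
  rw [ENNReal.ofReal_zero] at hb'
  exact tendsto_of_tendsto_of_tendsto_of_le_of_le tendsto_const_nhds hb'
    (fun k => zero_le) key

lemma unif_sq {pk : ℕ → HH n} {p₀ : HH n} (h : Tendsto pk atTop (𝓝 p₀)) :
    UnifIntegrable (fun k t => ‖(pk k).2 t‖^2) 1 μ₀ :=
  unifIntegrable_of_tendsto_Lp le_rfl (by norm_num)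
    (fun k => memLp_one_iff_integrable.2 (integrable_nrm_sq (pk k).2))
    (memLp_one_iff_integrable.2 (integrable_nrm_sq p₀.2)) (sq_tendsto_L1 h)

lemma unif_nrm {pk : ℕ → HH n} {p₀ : HH n} (h : Tendsto pk atTop (𝓝 p₀)) :
    UnifIntegrable (fun k t => ‖(pk k).2 t‖) 2 μ₀ := by
  refine unifIntegrable_of_tendsto_Lp (p := 2) (by norm_num) (by norm_num)
    (fun k => memLp_norm (pk k).2) (memLp_norm p₀.2) ?_
  have key : ∀ k, eLpNorm ((fun t => ‖(pk k).2 t‖) - fun t => ‖p₀.2 t‖) 2 μ₀ ≤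
      ENNReal.ofReal ‖(pk k).2 - p₀.2‖ := by
    intro k
    rw [← eLp_sub]
    refine eLpNorm_mono fun t => ?_
    simp only [Pi.sub_apply, Real.norm_eq_abs]
    exact abs_norm_sub_norm_le _ _
  have hb' := ENNReal.tendsto_ofReal (a := (0:ℝ)) (norm_tendsto h)
  rw [ENNReal.ofReal_zero] at hb'
  exact tendsto_of_tendsto_of_tendsto_of_le_of_le tendsto_const_nhds hb'
    (fun k => zero_le) key

include hC2 hgrow_q in
lemma int_aqf (p : HH n) : Integrable (aqf L p) μ₀ := by
  refine Integrable.mono' (int_poly p.2 ℓ₂) (aqf_aesm hC2 p) ?_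
  exact Eventually.of_forall fun t => Aq_le hC2 hgrow_q t (crv p t) (p.2 t)

include hC2 hgrow_v in
lemma memLp_avf (p : HH n) : MemLp (avf L p) 2 μ₀ := by
  have hl2 : 0 ≤ ℓ₂ := l2_nonneg hgrow_v
  refine MemLp.of_le (memLp_aff p.2 ℓ₂) (avf_aesm hC2 p) ?_
  refine Eventually.of_forall fun t => ?_
  refine (Av_le hC2 hgrow_v t (crv p t) (p.2 t)).trans ?_
  rw [Real.norm_eq_abs, abs_of_nonneg (by positivity)]

include hC2 hgrow_q in
lemma aqf_conv {pk : ℕ → HH n} {p₀ : HH n} (h : Tendsto pk atTop (𝓝 p₀)) :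
    Tendsto (fun k => ∫ t, ‖aqf L (pk k) t - aqf L p₀ t‖ ∂μ₀) atTop (𝓝 0) := by
  have hl2 : 0 ≤ ℓ₂ := by
    have := (norm_nonneg (fderiv ℝ (fun q' => L 0 q' 0) 0)).trans (hgrow_q 0 0 0)
    simpa using this
  have htim : TendstoInMeasure μ₀ (fun k => aqf L (pk k)) atTop (aqf L p₀) :=
    tim (Aq_cont hC2) h
  have hui : UnifIntegrable (fun k => aqf L (pk k)) 1 μ₀ := by
    refine unif_of_le (h := fun k t => ℓ₂ + ℓ₂ * ‖(pk k).2 t‖^2) ?_ ?_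
    · intro k t
      refine (Aq_le hC2 hgrow_q t (crv (pk k) t) ((pk k).2 t)).trans (le_of_eq ?_)
      ring
    · have h1 : UnifIntegrable (fun (_ : ℕ) (_ : ℝ) => ℓ₂) 1 μ₀ :=
        unifIntegrable_const le_rfl (by norm_num) (memLp_const ℓ₂)
      have h2 : UnifIntegrable (fun k t => ℓ₂ * ‖(pk k).2 t‖^2) 1 μ₀ :=
        unif_smul ℓ₂ (unif_sq h)
      have := h1.add h2 le_rfl (fun i => aestronglyMeasurable_const)
        (fun i => (aesm_nrm_sq (pk i).2).const_mul ℓ₂)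
      exact this
  have hmem : MemLp (aqf L p₀) 1 μ₀ := memLp_one_iff_integrable.2 (int_aqf hC2 hgrow_q p₀)
  have hV := tendsto_Lp_finite_of_tendstoInMeasure le_rfl (by norm_num)
    (fun k => aqf_aesm hC2 (pk k)) hmem hui htim
  have hV' := (ENNReal.tendsto_toReal (by simp)).comp hV
  simp only [ENNReal.toReal_zero] at hV'
  refine hV'.congr fun k => ?_
  rw [Function.comp_apply, eLpNorm_one_eq_lintegral_enorm,
    ← integral_norm_eq_lintegral_enorm ((aqf_aesm hC2 (pk k)).sub (aqf_aesm hC2 p₀))]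
  rfl

include hC2 hgrow_v in
lemma avf_conv {pk : ℕ → HH n} {p₀ : HH n} (h : Tendsto pk atTop (𝓝 p₀)) :
    Tendsto (fun k => (eLpNorm (avf L (pk k) - avf L p₀) 2 μ₀).toReal) atTop (𝓝 0) := by
  have hl2 : 0 ≤ ℓ₂ := l2_nonneg hgrow_v
  have htim : TendstoInMeasure μ₀ (fun k => avf L (pk k)) atTop (avf L p₀) :=
    tim (Av_cont hC2) h
  have hui : UnifIntegrable (fun k => avf L (pk k)) 2 μ₀ := by
    refine unif_of_le (h := fun k t => ℓ₂ + ℓ₂ * ‖(pk k).2 t‖) ?_ ?_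
    · intro k t
      refine (Av_le hC2 hgrow_v t (crv (pk k) t) ((pk k).2 t)).trans (le_of_eq ?_)
      ring
    · have h1 : UnifIntegrable (fun (_ : ℕ) (_ : ℝ) => ℓ₂) 2 μ₀ :=
        unifIntegrable_const (by norm_num) (by norm_num) (memLp_const ℓ₂)
      have h2 : UnifIntegrable (fun k t => ℓ₂ * ‖(pk k).2 t‖) 2 μ₀ :=
        unif_smul ℓ₂ (unif_nrm h)
      exact h1.add h2 (by norm_num) (fun i => aestronglyMeasurable_const)
        (fun i => ((Lp.aestronglyMeasurable (pk i).2).norm.const_mul ℓ₂))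
  have hV := tendsto_Lp_finite_of_tendstoInMeasure (by norm_num) (by norm_num)
    (fun k => avf_aesm hC2 (pk k)) (memLp_avf hC2 hgrow_v p₀) hui htim
  have hV' := (ENNReal.tendsto_toReal (by simp)).comp hV
  simpa [Function.comp_def] using hV'

end Vitali


section Continuity

variable {L : ℝ → EE n → EE n → ℝ} {ℓ₂ : ℝ}
variable (hC2 : ContDiff ℝ 2 (fun p : ℝ × EE n × EE n => L p.1 p.2.1 p.2.2))
variable (hgrow_q : ∀ t q v, ‖fderiv ℝ (fun q' => L t q' v) q‖ ≤ ℓ₂ * (1 + ‖v‖ ^ 2))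
variable (hgrow_v : ∀ t q v, ‖fderiv ℝ (L t q) v‖ ≤ ℓ₂ * (1 + ‖v‖))

include hC2 hgrow_q hgrow_v

lemma memLp_avf_diff_norm (p p₀ : HH n) :
    MemLp (fun t => ‖avf L p t - avf L p₀ t‖) 2 μ₀ := by
  have hl2 : 0 ≤ ℓ₂ := l2_nonneg hgrow_v
  have hmem : MemLp (fun t => ℓ₂ * (1 + ‖p.2 t‖) + ℓ₂ * (1 + ‖p₀.2 t‖)) 2 μ₀ :=
    (memLp_aff p.2 ℓ₂).add (memLp_aff p₀.2 ℓ₂)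
  refine MemLp.of_le hmem
    (((avf_aesm hC2 p).sub (avf_aesm hC2 p₀)).norm) ?_
  refine Eventually.of_forall fun t => ?_
  have h1 := Av_le hC2 hgrow_v t (crv p t) (p.2 t)
  have h2 := Av_le hC2 hgrow_v t (crv p₀ t) (p₀.2 t)
  have h3 := norm_sub_le (avf L p t) (avf L p₀ t)
  rw [norm_norm, Real.norm_eq_abs, abs_of_nonneg (by positivity)]
  calc ‖avf L p t - avf L p₀ t‖ ≤ ‖avf L p t‖ + ‖avf L p₀ t‖ := h3
  _ ≤ ℓ₂ * (1 + ‖p.2 t‖) + ℓ₂ * (1 + ‖p₀.2 t‖) := add_le_add h1 h2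

lemma Bop_diff_le (p p₀ : HH n) :
    ‖Bop hC2 hgrow_q hgrow_v p - Bop hC2 hgrow_q hgrow_v p₀‖ ≤
      2 * (∫ t, ‖aqf L p t - aqf L p₀ t‖ ∂μ₀) +
        (eLpNorm (avf L p - avf L p₀) 2 μ₀).toReal := by
  have hα : (0:ℝ) ≤ ∫ t, ‖aqf L p t - aqf L p₀ t‖ ∂μ₀ :=
    integral_nonneg fun t => norm_nonneg _
  refine ContinuousLinearMap.opNorm_le_bound _ (by positivity) fun w => ?_
  have hint1 : Integrable (fun t => aqf L p t (crv w t) - aqf L p₀ t (crv w t)) μ₀ :=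
    (int_one hC2 hgrow_q p w).sub (int_one hC2 hgrow_q p₀ w)
  have hint2 : Integrable (fun t => avf L p t (w.2 t) - avf L p₀ t (w.2 t)) μ₀ :=
    (int_two hC2 hgrow_v p w).sub (int_two hC2 hgrow_v p₀ w)
  have heq : (Bop hC2 hgrow_q hgrow_v p - Bop hC2 hgrow_q hgrow_v p₀) w =
      ∫ t, ((aqf L p t (crv w t) - aqf L p₀ t (crv w t)) +
        (avf L p t (w.2 t) - avf L p₀ t (w.2 t))) ∂μ₀ := by
    rw [ContinuousLinearMap.sub_apply]
    show (∫ t, (aqf L p t (crv w t) + avf L p t (w.2 t)) ∂μ₀) -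
        (∫ t, (aqf L p₀ t (crv w t) + avf L p₀ t (w.2 t)) ∂μ₀) = _
    rw [← integral_sub (int_BopFun hC2 hgrow_q hgrow_v p w) (int_BopFun hC2 hgrow_q hgrow_v p₀ w)]
    refine integral_congr_ae (Eventually.of_forall fun t => ?_)
    show _ - _ = _
    ring
  rw [heq]
  have hb1 : Integrable (fun t => ‖aqf L p t - aqf L p₀ t‖ * (2 * ‖w‖)) μ₀ :=
    (((int_aqf hC2 hgrow_q p).sub (int_aqf hC2 hgrow_q p₀)).norm).mul_const _
  have hcs := cs_integral (memLp_avf_diff_norm hC2 hgrow_q hgrow_v p p₀) (memLp_norm w.2)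
  calc ‖∫ t, ((aqf L p t (crv w t) - aqf L p₀ t (crv w t)) +
        (avf L p t (w.2 t) - avf L p₀ t (w.2 t))) ∂μ₀‖
      ≤ ∫ t, ‖(aqf L p t (crv w t) - aqf L p₀ t (crv w t)) +
        (avf L p t (w.2 t) - avf L p₀ t (w.2 t))‖ ∂μ₀ := norm_integral_le_integral_norm _
  _ ≤ ∫ t, (‖aqf L p t - aqf L p₀ t‖ * (2 * ‖w‖) +
        ‖avf L p t - avf L p₀ t‖ * ‖w.2 t‖) ∂μ₀ := by
      refine integral_mono_ae (hint1.add hint2).norm (hb1.add hcs.1) ?_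
      filter_upwards [ae_restrict_mem measurableSet_Ioc] with t ht
      have hIcc : t ∈ Icc (0:ℝ) 1 := Ioc_subset_Icc_self ht
      have hc : ‖crv w t‖ ≤ 2 * ‖w‖ := by
        refine (crv_le w hIcc).trans ?_
        have := norm_fst_le w; have := norm_snd_le w; linarith
      have e1 : ‖aqf L p t (crv w t) - aqf L p₀ t (crv w t)‖ ≤
          ‖aqf L p t - aqf L p₀ t‖ * (2 * ‖w‖) := by
        have : aqf L p t (crv w t) - aqf L p₀ t (crv w t) =
            (aqf L p t - aqf L p₀ t) (crv w t) := by
          rw [ContinuousLinearMap.sub_apply]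
        rw [this]
        refine (ContinuousLinearMap.le_opNorm _ _).trans ?_
        exact mul_le_mul_of_nonneg_left hc (norm_nonneg _)
      have e2 : ‖avf L p t (w.2 t) - avf L p₀ t (w.2 t)‖ ≤
          ‖avf L p t - avf L p₀ t‖ * ‖w.2 t‖ := by
        have : avf L p t (w.2 t) - avf L p₀ t (w.2 t) = (avf L p t - avf L p₀ t) (w.2 t) := by
          rw [ContinuousLinearMap.sub_apply]
        rw [this]
        exact ContinuousLinearMap.le_opNorm _ _
      exact (norm_add_le _ _).trans (add_le_add e1 e2)
  _ ≤ (∫ t, ‖aqf L p t - aqf L p₀ t‖ ∂μ₀) * (2 * ‖w‖) +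
        (eLpNorm (avf L p - avf L p₀) 2 μ₀).toReal * ‖w.2‖ := by
      rw [integral_add hb1 hcs.1, integral_mul_const]
      refine add_le_add le_rfl (hcs.2.trans ?_)
      rw [eLp_norm_toReal]
      refine mul_le_mul_of_nonneg_right (le_of_eq ?_) (norm_nonneg _)
      rw [eLpNorm_norm]
      congr 1
  _ ≤ (2 * (∫ t, ‖aqf L p t - aqf L p₀ t‖ ∂μ₀) +
        (eLpNorm (avf L p - avf L p₀) 2 μ₀).toReal) * ‖w‖ := by
      have h2 : ‖w.2‖ ≤ ‖w‖ := norm_snd_le w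
      have hτ : (0:ℝ) ≤ (eLpNorm (avf L p - avf L p₀) 2 μ₀).toReal := ENNReal.toReal_nonneg
      nlinarith [norm_nonneg w]

lemma Bop_cont : Continuous (Bop hC2 hgrow_q hgrow_v) := by
  rw [continuous_iff_continuousAt]
  intro p₀
  rw [ContinuousAt, tendsto_iff_seq_tendsto]
  intro pk hpk
  rw [tendsto_iff_norm_sub_tendsto_zero]
  have key : ∀ k, ‖Bop hC2 hgrow_q hgrow_v (pk k) - Bop hC2 hgrow_q hgrow_v p₀‖ ≤
      2 * (∫ t, ‖aqf L (pk k) t - aqf L p₀ t‖ ∂μ₀) +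
        (eLpNorm (avf L (pk k) - avf L p₀) 2 μ₀).toReal :=
    fun k => Bop_diff_le hC2 hgrow_q hgrow_v (pk k) p₀
  have h1 := aqf_conv hC2 hgrow_q hpk
  have h2 := avf_conv hC2 hgrow_v hpk
  have hlim : Tendsto (fun k => 2 * (∫ t, ‖aqf L (pk k) t - aqf L p₀ t‖ ∂μ₀) +
      (eLpNorm (avf L (pk k) - avf L p₀) 2 μ₀).toReal) atTop (𝓝 0) := by
    have := (h1.const_mul 2).add h2
    simpa using this
  exact squeeze_zero (fun k => norm_nonneg _) key hlim

end Continuity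


section Diff

variable {L : ℝ → EE n → EE n → ℝ} {ℓ₂ : ℝ}
variable (hC2 : ContDiff ℝ 2 (fun p : ℝ × EE n × EE n => L p.1 p.2.1 p.2.2))
variable (hgrow_q : ∀ t q v, ‖fderiv ℝ (fun q' => L t q' v) q‖ ≤ ℓ₂ * (1 + ‖v‖ ^ 2))
variable (hgrow_v : ∀ t q v, ‖fderiv ℝ (L t q) v‖ ≤ ℓ₂ * (1 + ‖v‖))

lemma sq_int {f : ℝ → ℝ} (hf : MemLp f 2 μ₀) : Integrable (fun t => (f t)^2) μ₀ := by
  have h := hf.integrable_norm_rpow (by norm_num) (by norm_num)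
  refine h.congr (Eventually.of_forall fun t => ?_)
  show ‖f t‖ ^ ((2:ENNReal).toReal) = (f t)^2
  rw [ENNReal.toReal_ofNat, show (2:ℝ) = ((2:ℕ):ℝ) by norm_num, Real.rpow_natCast,
    Real.norm_eq_abs, sq_abs]

lemma one_add_mul_int {f g : ℝ → ℝ} (hf : MemLp f 2 μ₀) (hg : MemLp g 2 μ₀) (c : ℝ) :
    Integrable (fun t => c * (1 + f t) * g t) μ₀ := by
  have := (cs_integral (hf.const_mul c) hg).1
  have h2 := (cs_integral (memLp_const (c:ℝ)) hg).1
  refine (h2.add this).congr (Eventually.of_forall fun t => ?_)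
  simp only [Pi.add_apply]
  ring

include hC2 hgrow_q hgrow_v

lemma int_L (p : HH n) : Integrable (fun t => L t (crv p t) (p.2 t)) μ₀ := by
  have hl2 : 0 ≤ ℓ₂ := l2_nonneg hgrow_v
  obtain ⟨M, hM0, hM⟩ := L_scalar_bound hC2 hgrow_q hgrow_v
  set R := ‖p.1‖ + ‖p.2‖ with hR
  have hR0 : 0 ≤ R := by positivity
  have hint : Integrable (fun t => M + ℓ₂ * R * (1 + ‖p.2 t‖^2)
      + ℓ₂ * (1 + ‖p.2 t‖) * ‖p.2 t‖) μ₀ :=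
    ((integrable_const M).add (int_poly p.2 (ℓ₂ * R))).add
      (one_add_mul_int (memLp_norm p.2) (memLp_norm p.2) ℓ₂)
  refine Integrable.mono' hint (hC2.continuous.comp_aestronglyMeasurable (triple_aesm p)) ?_
  filter_upwards [ae_restrict_mem measurableSet_Ioc] with t ht
  have hIcc : t ∈ Icc (0:ℝ) 1 := Ioc_subset_Icc_self ht
  have hcb : ‖crv p t‖ ≤ R := crv_le p hIcc
  have hb := hM t hIcc (crv p t) (p.2 t)
  rw [Real.norm_eq_abs]
  have e1 : ℓ₂ * (1 + ‖p.2 t‖^2) * ‖crv p t‖ ≤ ℓ₂ * R * (1 + ‖p.2 t‖^2) := by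
    have h1 : 0 ≤ ℓ₂ * (1 + ‖p.2 t‖^2) := by positivity
    calc ℓ₂ * (1 + ‖p.2 t‖^2) * ‖crv p t‖ ≤ ℓ₂ * (1 + ‖p.2 t‖^2) * R :=
      mul_le_mul_of_nonneg_left hcb h1
    _ = ℓ₂ * R * (1 + ‖p.2 t‖^2) := by ring
  linarith

/-- the key parametric differentiation lemma -/
lemma hasDerivAt_phi (p₀ h : HH n) {s₀ : ℝ} (hs₀ : s₀ ∈ Icc (0:ℝ) 1) :
    HasDerivAt (fun s : ℝ => actionFunctional n L (p₀ + s • h))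
      (Bop hC2 hgrow_q hgrow_v (p₀ + s₀ • h) h) s₀ := by
  have hl2 : 0 ≤ ℓ₂ := l2_nonneg hgrow_v
  set F : ℝ → ℝ → ℝ :=
    fun s t => L t (crv p₀ t + s • crv h t) (p₀.2 t + s • h.2 t) with hF
  set F' : ℝ → ℝ → ℝ := fun s t =>
    Aq L t (crv p₀ t + s • crv h t) (p₀.2 t + s • h.2 t) (crv h t)
    + Av L t (crv p₀ t + s • crv h t) (p₀.2 t + s • h.2 t) (h.2 t) with hF'
  -- pointwise identification of the action along the line
  have hcoe : ∀ s : ℝ, ∀ᵐ t ∂μ₀, ((p₀ + s • h).2 : ℝ → EE n) t = p₀.2 t + s • h.2 t := by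
    intro s
    filter_upwards [Lp.coeFn_add p₀.2 (s • h.2), Lp.coeFn_smul s h.2] with t h1 h2
    show ((p₀.2 + s • h.2 : XX n) : ℝ → EE n) t = _
    rw [h1]
    show p₀.2 t + (s • h.2 : XX n) t = _
    rw [h2]
    rfl
  have hcrv_line : ∀ s : ℝ, ∀ t ∈ Icc (0:ℝ) 1,
      crv (p₀ + s • h) t = crv p₀ t + s • crv h t := by
    intro s t ht
    rw [crv_add' p₀ (s • h) ht, crv_smul' s h ht]
  have E1 : ∀ s : ℝ, actionFunctional n L (p₀ + s • h) = ∫ t, F s t ∂μ₀ := by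
    intro s
    show (∫ t, L t (crv (p₀ + s • h) t) (((p₀ + s • h).2 : ℝ → EE n) t) ∂μ₀) = _
    refine integral_congr_ae ?_
    filter_upwards [ae_restrict_mem measurableSet_Ioc, hcoe s] with t ht h2
    rw [hcrv_line s t (Ioc_subset_Icc_self ht), h2]
  -- measurability
  have htriple : ∀ s : ℝ, AEStronglyMeasurable
      (fun t => ((t, crv p₀ t + s • crv h t, p₀.2 t + s • h.2 t) : ℝ × EE n × EE n)) μ₀ := by
    intro s
    refine aestronglyMeasurable_id.prodMk (AEStronglyMeasurable.prodMk ?_ ?_)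
    · exact (crv_aesm p₀).add ((crv_aesm h).const_smul s)
    · exact (Lp.aestronglyMeasurable p₀.2).add ((Lp.aestronglyMeasurable h.2).const_smul s)
  have hFmeas : ∀ s : ℝ, AEStronglyMeasurable (F s) μ₀ := fun s =>
    hC2.continuous.comp_aestronglyMeasurable (htriple s)
  have hF'meas : AEStronglyMeasurable (F' s₀) μ₀ := by
    refine AEStronglyMeasurable.add ?_ ?_
    · exact apply_aesm ((Aq_cont hC2).comp_aestronglyMeasurable (htriple s₀)) (crv_aesm h)
    · exact apply_aesm ((Av_cont hC2).comp_aestronglyMeasurable (htriple s₀))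
        (Lp.aestronglyMeasurable h.2)
  -- integrability of F s₀ : use E1 and int_L
  have hFint : Integrable (F s₀) μ₀ := by
    have := int_L hC2 hgrow_q hgrow_v (p₀ + s₀ • h)
    refine this.congr ?_
    filter_upwards [ae_restrict_mem measurableSet_Ioc, hcoe s₀] with t ht h2
    rw [hcrv_line s₀ t (Ioc_subset_Icc_self ht), h2]
  -- bound for F'
  set Ch := ‖h.1‖ + ‖h.2‖ with hCh
  have hCh0 : 0 ≤ Ch := by positivity
  set W : ℝ → ℝ := fun t => ‖p₀.2 t‖ + 2 * ‖h.2 t‖ with hW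
  have hWmem : MemLp W 2 μ₀ := (memLp_norm p₀.2).add ((memLp_norm h.2).const_mul 2)
  set bound : ℝ → ℝ := fun t => ℓ₂ * (1 + (W t)^2) * Ch + ℓ₂ * (1 + W t) * ‖h.2 t‖
    with hbound
  have hbound_int : Integrable bound μ₀ := by
    refine Integrable.add ?_ ?_
    · have h1 : Integrable (fun t => (W t)^2) μ₀ := sq_int hWmem
      have := ((integrable_const (1:ℝ)).add h1).const_mul (ℓ₂ * Ch)
      refine this.congr (Eventually.of_forall fun t => ?_)
      simp only [Pi.add_apply]
      ring
    · exact one_add_mul_int hWmem (memLp_norm h.2) ℓ₂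
  have hVle : ∀ t : ℝ, ∀ s ∈ Metric.ball s₀ (1:ℝ), ‖p₀.2 t + s • h.2 t‖ ≤ W t := by
    intro t s hs
    have habs : |s| ≤ 2 := by
      have h1 : |s - s₀| < 1 := by
        rw [← Real.dist_eq]; exact hs
      have h2 : |s₀| ≤ 1 := abs_le.2 ⟨by linarith [hs₀.1], hs₀.2⟩
      calc |s| = |s - s₀ + s₀| := by ring_nf
      _ ≤ |s - s₀| + |s₀| := abs_add_le _ _
      _ ≤ 2 := by linarith
    calc ‖p₀.2 t + s • h.2 t‖ ≤ ‖p₀.2 t‖ + ‖s • h.2 t‖ := norm_add_le _ _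
    _ = ‖p₀.2 t‖ + |s| * ‖h.2 t‖ := by rw [norm_smul, Real.norm_eq_abs]
    _ ≤ W t := by
        have := mul_le_mul_of_nonneg_right habs (norm_nonneg (h.2 t))
        simp only [hW]; linarith
  have h_bd : ∀ᵐ t ∂μ₀, ∀ s ∈ Metric.ball s₀ (1:ℝ), ‖F' s t‖ ≤ bound t := by
    filter_upwards [ae_restrict_mem measurableSet_Ioc] with t ht s hs
    have hIcc : t ∈ Icc (0:ℝ) 1 := Ioc_subset_Icc_self ht
    have hch : ‖crv h t‖ ≤ Ch := crv_le h hIcc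
    have hv := hVle t s hs
    have hW0 : 0 ≤ W t := by positivity
    have e1 : ‖Aq L t (crv p₀ t + s • crv h t) (p₀.2 t + s • h.2 t) (crv h t)‖ ≤
        ℓ₂ * (1 + (W t)^2) * Ch := by
      refine (ContinuousLinearMap.le_opNorm _ _).trans ?_
      have hb := Aq_le hC2 hgrow_q t (crv p₀ t + s • crv h t) (p₀.2 t + s • h.2 t)
      have : ℓ₂ * (1 + ‖p₀.2 t + s • h.2 t‖^2) ≤ ℓ₂ * (1 + (W t)^2) := by
        have : ‖p₀.2 t + s • h.2 t‖^2 ≤ (W t)^2 := by nlinarith [norm_nonneg (p₀.2 t + s • h.2 t)]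
        nlinarith
      exact mul_le_mul (hb.trans this) hch (norm_nonneg _) (by positivity)
    have e2 : ‖Av L t (crv p₀ t + s • crv h t) (p₀.2 t + s • h.2 t) (h.2 t)‖ ≤
        ℓ₂ * (1 + W t) * ‖h.2 t‖ := by
      refine (ContinuousLinearMap.le_opNorm _ _).trans ?_
      have hb := Av_le hC2 hgrow_v t (crv p₀ t + s • crv h t) (p₀.2 t + s • h.2 t)
      have : ℓ₂ * (1 + ‖p₀.2 t + s • h.2 t‖) ≤ ℓ₂ * (1 + W t) := by nlinarith
      exact mul_le_mul_of_nonneg_right (hb.trans this) (norm_nonneg _)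
    exact (norm_add_le _ _).trans (add_le_add e1 e2)
  have h_diff : ∀ᵐ t ∂μ₀, ∀ s ∈ Metric.ball s₀ (1:ℝ), HasDerivAt (fun u => F u t) (F' s t) s := by
    refine Eventually.of_forall fun t s _ => ?_
    exact hasDerivAt_line hC2 t (crv p₀ t) (p₀.2 t) (crv h t) (h.2 t) s
  obtain ⟨-, hDer⟩ := hasDerivAt_integral_of_dominated_loc_of_deriv_le (Metric.ball_mem_nhds s₀ one_pos)
    (Eventually.of_forall hFmeas) hFint hF'meas h_bd hbound_int h_diff
  have E2 : ∫ t, F' s₀ t ∂μ₀ = Bop hC2 hgrow_q hgrow_v (p₀ + s₀ • h) h := by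
    rw [Bop_apply]
    refine integral_congr_ae ?_
    filter_upwards [ae_restrict_mem measurableSet_Ioc, hcoe s₀] with t ht h2
    rw [hF']
    show Aq L t _ _ (crv h t) + Av L t _ _ (h.2 t) = _
    rw [← hcrv_line s₀ t (Ioc_subset_Icc_self ht), ← h2]
  rw [E2] at hDer
  have : (fun s : ℝ => ∫ t, F s t ∂μ₀) = fun s => actionFunctional n L (p₀ + s • h) :=
    funext fun s => (E1 s).symm
  rwa [this] at hDer

end Diff

section Main

variable {L : ℝ → EE n → EE n → ℝ} {ℓ₂ : ℝ}
variable (hC2 : ContDiff ℝ 2 (fun p : ℝ × EE n × EE n => L p.1 p.2.1 p.2.2))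
variable (hgrow_q : ∀ t q v, ‖fderiv ℝ (fun q' => L t q' v) q‖ ≤ ℓ₂ * (1 + ‖v‖ ^ 2))
variable (hgrow_v : ∀ t q v, ‖fderiv ℝ (L t q) v‖ ≤ ℓ₂ * (1 + ‖v‖))

include hC2 hgrow_q hgrow_v

lemma hasFDerivAt_action (p₀ : HH n) :
    HasFDerivAt (actionFunctional n L) (Bop hC2 hgrow_q hgrow_v p₀) p₀ := by
  rw [hasFDerivAt_iff_isLittleO_nhds_zero, Asymptotics.isLittleO_iff]
  intro c hc
  have hcont := (Bop_cont hC2 hgrow_q hgrow_v).continuousAt (x := p₀)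
  rw [Metric.continuousAt_iff] at hcont
  obtain ⟨δ, hδ, hδ'⟩ := hcont c hc
  rw [Metric.eventually_nhds_iff]
  refine ⟨δ, hδ, fun h hmem => ?_⟩
  show ‖actionFunctional n L (p₀ + h) - actionFunctional n L p₀
    - Bop hC2 hgrow_q hgrow_v p₀ h‖ ≤ c * ‖h‖
  have hnorm : ‖h‖ < δ := by rwa [dist_zero_right] at hmem
  set ψ : ℝ → ℝ := fun s => Bop hC2 hgrow_q hgrow_v (p₀ + s • h) h with hψ
  have hψcont : Continuous ψ := by
    have h1 : Continuous fun s : ℝ => p₀ + s • h :=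
      continuous_const.add (continuous_id.smul continuous_const)
    have h2 := (Bop_cont hC2 hgrow_q hgrow_v).comp h1
    exact isBoundedBilinearMap_apply.continuous.comp (h2.prodMk continuous_const)
  have hFTC : ∫ s in (0:ℝ)..1, ψ s =
      actionFunctional n L (p₀ + h) - actionFunctional n L p₀ := by
    have heq := intervalIntegral.integral_eq_sub_of_hasDerivAt
      (f := fun s => actionFunctional n L (p₀ + s • h)) (f' := ψ) (a := 0) (b := 1)
      (fun s hs => by
        rw [uIcc_of_le (by norm_num : (0:ℝ) ≤ 1)] at hs
        exact hasDerivAt_phi hC2 hgrow_q hgrow_v p₀ h hs)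
      (hψcont.intervalIntegrable 0 1)
    rw [heq]
    simp only [one_smul, zero_smul, add_zero]
  have hrem : actionFunctional n L (p₀ + h) - actionFunctional n L p₀
      - Bop hC2 hgrow_q hgrow_v p₀ h
      = ∫ s in (0:ℝ)..1, (ψ s - Bop hC2 hgrow_q hgrow_v p₀ h) := by
    rw [intervalIntegral.integral_sub (hψcont.intervalIntegrable 0 1)
      intervalIntegrable_const, hFTC, intervalIntegral.integral_const]
    simp
  rw [hrem]
  have hbd : ∀ s ∈ Set.uIoc (0:ℝ) (1:ℝ), ‖ψ s - Bop hC2 hgrow_q hgrow_v p₀ h‖ ≤ c * ‖h‖ := by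
   intro s hs
   rw [uIoc_of_le (by norm_num : (0:ℝ) ≤ 1)] at hs
   have hdist : dist (p₀ + s • h) p₀ < δ := by
     rw [dist_eq_norm, add_sub_cancel_left, norm_smul, Real.norm_eq_abs]
     have habs : |s| ≤ 1 := abs_le.2 ⟨by linarith [hs.1], hs.2⟩
     calc |s| * ‖h‖ ≤ 1 * ‖h‖ := mul_le_mul_of_nonneg_right habs (norm_nonneg _)
     _ = ‖h‖ := one_mul _
     _ < δ := hnorm
   have hlt := hδ' hdist
   rw [dist_eq_norm] at hlt
   calc ‖ψ s - Bop hC2 hgrow_q hgrow_v p₀ h‖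
       = ‖(Bop hC2 hgrow_q hgrow_v (p₀ + s • h) - Bop hC2 hgrow_q hgrow_v p₀) h‖ := by
         rw [ContinuousLinearMap.sub_apply]
   _ ≤ ‖Bop hC2 hgrow_q hgrow_v (p₀ + s • h) - Bop hC2 hgrow_q hgrow_v p₀‖ * ‖h‖ :=
         ContinuousLinearMap.le_opNorm _ _
   _ ≤ c * ‖h‖ := mul_le_mul_of_nonneg_right hlt.le (norm_nonneg _)
  calc ‖∫ s in (0:ℝ)..1, (ψ s - Bop hC2 hgrow_q hgrow_v p₀ h)‖
      ≤ (c * ‖h‖) * |1 - 0| := intervalIntegral.norm_integral_le_of_norm_le_const hbd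
  _ = c * ‖h‖ := by simp

end Main

end Stmt9Aux

/-- Proposition 3.1 (C¹ part): under the growth bounds
`‖D_vL‖ ≤ ℓ₂(1+|v|)`, `‖D_qL‖ ≤ ℓ₂(1+|v|²)`, the Lagrangian action functional
is continuously (Fréchet) differentiable on `W^{1,2}([0,1],ℝⁿ)`, with the
expected differential. -/
theorem stmt9 (n : ℕ) (ℓ₂ : ℝ)
    (L : ℝ → EuclideanSpace ℝ (Fin n) → EuclideanSpace ℝ (Fin n) → ℝ)
    (hC2 : ContDiff ℝ 2 (fun p : ℝ × EuclideanSpace ℝ (Fin n) ×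
      EuclideanSpace ℝ (Fin n) => L p.1 p.2.1 p.2.2))
    (hgrow_v : ∀ t q v, ‖fderiv ℝ (L t q) v‖ ≤ ℓ₂ * (1 + ‖v‖))
    (hgrow_q : ∀ t q v, ‖fderiv ℝ (fun q' => L t q' v) q‖ ≤ ℓ₂ * (1 + ‖v‖ ^ 2)) :
    ContDiff ℝ 1 (actionFunctional n L) ∧
    ∀ (a b : EuclideanSpace ℝ (Fin n))
      (g ξ : Lp (EuclideanSpace ℝ (Fin n)) 2 (volume.restrict (Ioc (0:ℝ) 1))),
      fderiv ℝ (actionFunctional n L) (a, g) (b, ξ) =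
        ∫ t in Ioc (0:ℝ) 1,
          ((fderiv ℝ (fun q' => L t q' (g t))
              (a + ∫ s in Ioc (0:ℝ) t, g s))
            (b + ∫ s in Ioc (0:ℝ) t, ξ s)
          + (fderiv ℝ (L t (a + ∫ s in Ioc (0:ℝ) t, g s)) (g t)) (ξ t)) := by
  have hdiff : ∀ p : HH n, HasFDerivAt (actionFunctional n L) (Bop hC2 hgrow_q hgrow_v p) p :=
    hasFDerivAt_action hC2 hgrow_q hgrow_v
  constructor
  · rw [contDiff_one_iff_fderiv]
    refine ⟨fun p => (hdiff p).differentiableAt, ?_⟩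
    have heq : (fderiv ℝ (actionFunctional n L)) = Bop hC2 hgrow_q hgrow_v :=
      funext fun p => (hdiff p).fderiv
    rw [heq]
    exact Bop_cont hC2 hgrow_q hgrow_v
  · intro a b g ξ
    have h1 := (hdiff ((a, g) : HH n)).fderiv
    rw [h1, Bop_apply hC2 hgrow_q hgrow_v ((a, g) : HH n) ((b, ξ) : HH n)]
    refine integral_congr_ae (Eventually.of_forall fun t => ?_)
    simp only [fderiv_q_eq hC2, fderiv_v_eq hC2]
    rfl
end

section
/- Let φ : [0,∞) → [0,1] be smooth, nonincreasing, with φ = 1 on [0,R] and φ = 0 on [R+1,∞), and let C ≥ 1. Let H : [0,1] × ℝ^{2n} → ℝ be C² with ∇H(t,q,p)·(0,p) − H(t,q,p) ≥ a(|p|) for a function a growing at most linearly, and with H(t,q,p) ≤ C|p|² for R ≤ |p| ≤ R+1 and |p|² ≥ a(|p|) for |p| ≥ R. Define H₀(t,q,p) := φ(|p|)H(t,q,p) + (1−φ(|p|))C|p|². Then H₀ satisfies ∇H₀(t,q,p)·(0,p) − H₀(t,q,p) ≥ a(|p|) for all (t,q,p). -/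
set_option maxHeartbeats 1000000

open Set

/-- Abstract version of the interpolation estimate, over a general real inner
product space. -/
theorem stmt17_aux {E : Type*} [NormedAddCommGroup E] [InnerProductSpace ℝ E]
    (R C : ℝ) (hR : 0 < R) (hC : 1 ≤ C)
    (φ : ℝ → ℝ) (hφ : ContDiff ℝ (⊤ : ℕ∞) φ) (hφmono : Antitone φ)
    (hφ01 : ∀ s, 0 ≤ φ s ∧ φ s ≤ 1)
    (hφ1 : ∀ s ≤ R, φ s = 1) (hφ0 : ∀ s, R + 1 ≤ s → φ s = 0)
    (a : ℝ → ℝ)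
    (H H₀ : ℝ → E × E → ℝ)
    (hHd : ∀ t x, DifferentiableAt ℝ (H t) x)
    (hH1 : ∀ t x, a ‖x.2‖ ≤ fderiv ℝ (H t) x ((0 : E), x.2) - H t x)
    (hH2 : ∀ t x, R ≤ ‖x.2‖ → ‖x.2‖ ≤ R + 1 → H t x ≤ C * ‖x.2‖ ^ 2)
    (hH3 : ∀ x : E × E, R ≤ ‖x.2‖ → a ‖x.2‖ ≤ ‖x.2‖ ^ 2)
    (hH₀ : ∀ t x, H₀ t x = φ ‖x.2‖ * H t x + (1 - φ ‖x.2‖) * C * ‖x.2‖ ^ 2) :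
    ∀ t x, a ‖x.2‖ ≤ fderiv ℝ (H₀ t) x ((0 : E), x.2) - H₀ t x := by
  intro t x
  rcases lt_or_ge ‖x.2‖ R with hcase | hcase
  · -- near x, H₀ t = H t
    have hev : H₀ t =ᶠ[nhds x] H t := by
      have hopen : IsOpen {y : E × E | ‖y.2‖ < R} :=
        isOpen_lt (continuous_norm.comp continuous_snd) continuous_const
      filter_upwards [hopen.mem_nhds hcase] with y hy
      rw [hH₀ t y, hφ1 _ (le_of_lt hy)]; ring
    rw [hev.fderiv_eq, hev.eq_of_nhds]
    exact hH1 t x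
  · have hp : x.2 ≠ 0 := by
      intro h; rw [h, norm_zero] at hcase; linarith
    set s : ℝ := ‖x.2‖ with hs
    have hs0 : 0 < s := lt_of_lt_of_le hR hcase
    -- differentiability of the norm of the second component
    have hNd : DifferentiableAt ℝ (fun y : E × E => ‖y.2‖) x :=
      differentiableAt_snd.norm ℝ hp
    set L := fderiv ℝ (fun y : E × E => ‖y.2‖) x with hL
    have hN : HasFDerivAt (fun y : E × E => ‖y.2‖) L x := hNd.hasFDerivAt
    -- compute L (0, x.2) = s using the radial curve ε ↦ (x.1, x.2 + ε • x.2)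
    have hLv : L ((0 : E), x.2) = s := by
      have hc : HasDerivAt (fun ε : ℝ => ((x.1, x.2 + ε • x.2) : E × E))
          ((0 : E), x.2) 0 := by
        have h2 : HasDerivAt (fun ε : ℝ => x.2 + ε • x.2) x.2 0 := by
          simpa using (((hasDerivAt_id (0:ℝ)).smul_const x.2).const_add x.2)
        exact (hasDerivAt_const (0:ℝ) x.1).prodMk h2
      have hx0 : ((x.1, x.2 + (0:ℝ) • x.2) : E × E) = x := by simp
      have hN' : HasFDerivAt (fun y : E × E => ‖y.2‖) L
          ((x.1, x.2 + (0:ℝ) • x.2) : E × E) := by rw [hx0]; exact hN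
      have h1 : HasDerivAt (fun ε : ℝ => ‖x.2 + ε • x.2‖)
          (L ((0 : E), x.2)) 0 := by have := hN'.comp_hasDerivAt 0 hc; exact this
      have h2 : HasDerivAt (fun ε : ℝ => (1 + ε) * s) s 0 := by
        simpa using ((hasDerivAt_id (0:ℝ)).const_add (1:ℝ)).mul_const s
      have heq : (fun ε : ℝ => (1 + ε) * s) =ᶠ[nhds (0:ℝ)]
          fun ε : ℝ => ‖x.2 + ε • x.2‖ := by
        filter_upwards [isOpen_Ioi.mem_nhds (show (-1:ℝ) < 0 by norm_num)] with ε hε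
        have hε' : (0:ℝ) < 1 + ε := by have := mem_Ioi.mp hε; linarith
        have hrw : x.2 + ε • x.2 = (1 + ε) • x.2 := by rw [add_smul, one_smul]
        rw [hrw, norm_smul, Real.norm_eq_abs, abs_of_pos hε', hs]
      exact (h1.congr_of_eventuallyEq heq).unique h2
    -- derivative of φ at s
    set d : ℝ := deriv φ s with hdd
    have hφd : HasDerivAt φ d s := ((hφ.differentiable (by simp)) s).hasDerivAt
    have hφN : HasFDerivAt (fun y : E × E => φ ‖y.2‖) (d • L) x :=
      hφd.comp_hasFDerivAt x hN
    -- d ≤ 0 since φ is antitone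
    have hd_nonpos : d ≤ 0 := by
      have h1 := hasDerivAt_iff_tendsto_slope.mp hφd
      refine le_of_tendsto h1 ?_
      filter_upwards [self_mem_nhdsWithin] with y hy
      have hy' : y ≠ s := hy
      rcases lt_or_gt_of_ne hy' with h | h
      · rw [slope_def_field]
        exact div_nonpos_of_nonneg_of_nonpos (sub_nonneg.2 (hφmono h.le)) (by linarith)
      · rw [slope_def_field]
        exact div_nonpos_of_nonpos_of_nonneg (sub_nonpos.2 (hφmono h.le)) (by linarith)
    set D2 := fderiv ℝ (H t) x with hD2
    have hH' : HasFDerivAt (H t) D2 x := (hHd t x).hasFDerivAt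
    -- the total derivative of H₀ t
    have hF : HasFDerivAt (H₀ t)
        ((φ s • D2 + H t x • (d • L)) +
          ((1 - φ s) • (C • (s • L + s • L)) + (C * (s * s)) • (0 - d • L))) x := by
      have hfun : H₀ t = fun y : E × E =>
          φ ‖y.2‖ * H t y + (1 - φ ‖y.2‖) * (C * (‖y.2‖ * ‖y.2‖)) := by
        funext y; rw [hH₀ t y]; ring
      rw [hfun]
      exact (hφN.mul hH').add
        (((hasFDerivAt_const (1:ℝ) x).sub hφN).mul ((hN.mul hN).const_mul C))
    rw [hF.fderiv, hH₀ t x]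
    simp only [ContinuousLinearMap.add_apply, ContinuousLinearMap.smul_apply,
      ContinuousLinearMap.sub_apply, ContinuousLinearMap.zero_apply, hLv, smul_eq_mul]
    have h1 : a s ≤ D2 ((0 : E), x.2) - H t x := hH1 t x
    have hφs := hφ01 s
    have h3 : a s ≤ s ^ 2 := hH3 x hcase
    rcases le_or_gt s (R + 1) with h4 | h4
    · have h2 : H t x ≤ C * s ^ 2 := hH2 t x hcase h4
      nlinarith [mul_le_mul_of_nonneg_left h1 hφs.1,
        mul_le_mul_of_nonneg_left h3 (sub_nonneg.2 hφs.2),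
        mul_nonneg (mul_nonneg (neg_nonneg.2 hd_nonpos) hs0.le) (sub_nonneg.2 h2),
        mul_nonneg (sub_nonneg.2 hφs.2) (sq_nonneg s),
        mul_nonneg (mul_nonneg (sub_nonneg.2 (le_trans (by linarith) hC))
          (sub_nonneg.2 hφs.2)) (sq_nonneg s)]
    · have hd0 : d = 0 := by
        have hevφ : φ =ᶠ[nhds s] fun _ => (0:ℝ) := by
          filter_upwards [isOpen_Ioi.mem_nhds h4] with y hy
          exact hφ0 y (le_of_lt hy)
        rw [hdd, hevφ.deriv_eq, deriv_const]
      have hφ0s : φ s = 0 := hφ0 s h4.le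
      rw [hd0, hφ0s]
      nlinarith [sq_nonneg s]

/-- The interpolation `H₀ = φ(|p|)H + (1−φ(|p|))C|p|²` preserves the lower bound
`DH₀[Y] − H₀ ≥ a(|p|)` on the action integrand, where `Y(q,p) = (0,p)` is the
Liouville vector field. -/
theorem stmt17 (n : ℕ) (R C : ℝ) (hR : 0 < R) (hC : 1 ≤ C)
    (φ : ℝ → ℝ) (hφ : ContDiff ℝ (⊤ : ℕ∞) φ) (hφmono : Antitone φ)
    (hφ01 : ∀ s, 0 ≤ φ s ∧ φ s ≤ 1)
    (hφ1 : ∀ s ≤ R, φ s = 1) (hφ0 : ∀ s, R + 1 ≤ s → φ s = 0)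
    (a : ℝ → ℝ) (k : ℝ) (hlin : ∀ s, 0 ≤ s → a s ≤ k * (1 + s))
    (H H₀ : ℝ → EuclideanSpace ℝ (Fin n) × EuclideanSpace ℝ (Fin n) → ℝ)
    (hHsm : ContDiff ℝ 2 (fun z : ℝ × (EuclideanSpace ℝ (Fin n) ×
      EuclideanSpace ℝ (Fin n)) => H z.1 z.2))
    (hH1 : ∀ t x, a ‖x.2‖ ≤
      fderiv ℝ (H t) x ((0 : EuclideanSpace ℝ (Fin n)), x.2) - H t x)
    (hH2 : ∀ t x, R ≤ ‖x.2‖ → ‖x.2‖ ≤ R + 1 → H t x ≤ C * ‖x.2‖ ^ 2)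
    (hH3 : ∀ x : EuclideanSpace ℝ (Fin n) × EuclideanSpace ℝ (Fin n),
      R ≤ ‖x.2‖ → a ‖x.2‖ ≤ ‖x.2‖ ^ 2)
    (hH₀ : ∀ t x, H₀ t x = φ ‖x.2‖ * H t x + (1 - φ ‖x.2‖) * C * ‖x.2‖ ^ 2) :
    ∀ t x, a ‖x.2‖ ≤
      fderiv ℝ (H₀ t) x ((0 : EuclideanSpace ℝ (Fin n)), x.2) - H₀ t x := by
  refine stmt17_aux R C hR hC φ hφ hφmono hφ01 hφ1 hφ0 a H H₀ ?_ hH1 hH2 hH3 hH₀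
  intro t x
  have h1 : DifferentiableAt ℝ
      (fun z : ℝ × (EuclideanSpace ℝ (Fin n) × EuclideanSpace ℝ (Fin n)) =>
        H z.1 z.2) (t, x) :=
    (hHsm.differentiable (by norm_num)).differentiableAt
  have h2 : DifferentiableAt ℝ
      (fun y : EuclideanSpace ℝ (Fin n) × EuclideanSpace ℝ (Fin n) =>
        ((t, y) : ℝ × (EuclideanSpace ℝ (Fin n) × EuclideanSpace ℝ (Fin n)))) x :=
    (differentiableAt_const t).prodMk differentiableAt_id
  exact h1.comp x h2
end
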